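/- arXiv:1912.00807 — 8 statements merged into one kernel-verified Lean document; each statement's English description precedes it below -/
import Mathlib

section
/- Let λ be the fair-coin measure on Cantor space, let σ be a string, let n ∈ ℕ, and let 𝒜 ⊆ 2^ω be a measurable set with λ(𝒜 | σ) ≥ 2^{-n}. Then there exist two distinct strings τ₁ and τ₂, each extending σ and each of length |σ| + n + 1, such that λ(𝒜 | τ₁) ≥ 2^{-(n+1)} and λ(𝒜 | τ₂) ≥ 2^{-(n+1)}. -/
open MeasureTheory
open scoped ENNReal

/-- `σ` is an initial segment of the infinite binary sequence `X`. -/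
def PrefixOf (σ : List Bool) (X : ℕ → Bool) : Prop :=
  σ = (List.range σ.length).map X

/-- The cylinder `[σ]` of all infinite binary sequences extending the string `σ`. -/
def cyl (σ : List Bool) : Set (ℕ → Bool) := {X | PrefixOf σ X}

/-!
Call `τ` heavy when `λ(𝒜 ∩ [τ]) ≥ t · λ[τ]`. Since `[τ]` is the disjoint union of
its two children, a heavy string has a heavy child, so a heavy `σ` has heavy extensions of every
length. Take such an extension `τ₁` of length `|σ| + n + 1` for `t = 2^{-n}`. Removing `[τ₁]`
from `𝒜` costs `λ[τ₁] = 2^{-(n+1)} λ[σ]`, so `σ` is still heavy for `𝒜 \ [τ₁]` with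
`t = 2^{-(n+1)}`; a heavy extension `τ₂` for `𝒜 \ [τ₁]` must differ from `τ₁`.
-/

lemma prefixOf_append_singleton (σ : List Bool) (b : Bool) (X : ℕ → Bool) :
    PrefixOf (σ ++ [b]) X ↔ PrefixOf σ X ∧ b = X σ.length := by
  unfold PrefixOf
  rw [List.length_append, List.length_singleton, List.range_succ, List.map_append,
    List.map_singleton]
  constructor
  · intro h
    obtain ⟨h1, h2⟩ := List.append_inj h (by simp)
    exact ⟨h1, by simpa using h2⟩
  · rintro ⟨h1, h2⟩
    rw [← h1, ← h2]

lemma cyl_append_singleton (σ : List Bool) (b : Bool) :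
    cyl (σ ++ [b]) = cyl σ ∩ {X | X σ.length = b} := by
  ext X
  simp only [cyl, Set.mem_ofPred_eq, Set.mem_inter_iff, prefixOf_append_singleton, eq_comm]

lemma measure_inter_cyl_eq_add (μ : Measure (ℕ → Bool)) (B : Set (ℕ → Bool)) (σ : List Bool) :
    μ (B ∩ cyl σ) = μ (B ∩ cyl (σ ++ [false])) + μ (B ∩ cyl (σ ++ [true])) := by
  have hS : MeasurableSet {X : ℕ → Bool | X σ.length = false} :=
    measurableSet_eq_fun (measurable_pi_apply _) measurable_const
  have hdiff : (B ∩ cyl σ) \ {X | X σ.length = false} = B ∩ cyl (σ ++ [true]) := by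
    ext X
    simp [cyl_append_singleton, and_assoc]
  rw [← measure_inter_add_sdiff (B ∩ cyl σ) hS, hdiff, Set.inter_assoc, ← cyl_append_singleton]

lemma exists_le_measure_inter_cyl_append_singleton (μ : Measure (ℕ → Bool))
    (A : Set (ℕ → Bool)) (t : ℝ≥0∞) (σ : List Bool) (h : t * μ (cyl σ) ≤ μ (A ∩ cyl σ)) :
    ∃ b, t * μ (cyl (σ ++ [b])) ≤ μ (A ∩ cyl (σ ++ [b])) := by
  by_contra! hlight
  have hsplit := measure_inter_cyl_eq_add μ Set.univ σ
  simp only [Set.univ_inter] at hsplit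
  have hlt : μ (A ∩ cyl σ) < t * μ (cyl σ) := by
    rw [measure_inter_cyl_eq_add, hsplit, mul_add]
    exact ENNReal.add_lt_add (hlight false) (hlight true)
  exact hlt.not_ge h

lemma exists_extension_le_measure_inter_cyl (μ : Measure (ℕ → Bool))
    (A : Set (ℕ → Bool)) (t : ℝ≥0∞) (σ : List Bool) (k : ℕ)
    (h : t * μ (cyl σ) ≤ μ (A ∩ cyl σ)) :
    ∃ τ : List Bool, σ <+: τ ∧ τ.length = σ.length + k ∧ t * μ (cyl τ) ≤ μ (A ∩ cyl τ) := by
  induction k with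
  | zero => exact ⟨σ, List.prefix_refl σ, rfl, h⟩
  | succ k ih =>
    obtain ⟨τ, hpre, hlen, hτ⟩ := ih
    obtain ⟨b, hb⟩ := exists_le_measure_inter_cyl_append_singleton μ A t τ hτ
    exact ⟨τ ++ [b], hpre.trans (List.prefix_append τ [b]), by simp [hlen, Nat.add_assoc], hb⟩

lemma le_measure_inter_sdiff {α : Type*} [MeasurableSpace α] {μ : Measure α} {A C D : Set α}
    {s : ℝ≥0∞} (hD : μ D ≠ ∞) (h : s + μ D ≤ μ (A ∩ C)) : s ≤ μ ((A \ D) ∩ C) := by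
  have hsub : A ∩ C ⊆ ((A \ D) ∩ C) ∪ D := fun X ⟨hXA, hXC⟩ ↦ by
    by_cases hXD : X ∈ D
    · exact Or.inr hXD
    · exact Or.inl ⟨⟨hXA, hXD⟩, hXC⟩
  have hcover : μ (A ∩ C) ≤ μ ((A \ D) ∩ C) + μ D :=
    (measure_mono hsub).trans (measure_union_le _ _)
  exact (ENNReal.add_le_add_iff_right hD).mp (h.trans hcover)

lemma inv_two_pow_succ_add_self (n : ℕ) :
    (2 : ℝ≥0∞)⁻¹ ^ (n + 1) + 2⁻¹ ^ (n + 1) = 2⁻¹ ^ n := by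
  rw [pow_succ, ← mul_add, ENNReal.inv_two_add_inv_two, mul_one]

section FairCoin

variable {μ : Measure (ℕ → Bool)} (hμ : ∀ σ : List Bool, μ (cyl σ) = (2 : ℝ≥0∞)⁻¹ ^ σ.length)
include hμ

lemma measure_cyl_ne_zero (σ : List Bool) : μ (cyl σ) ≠ 0 := by
  simp [hμ]

lemma measure_cyl_ne_top (σ : List Bool) : μ (cyl σ) ≠ ∞ := by
  simp [hμ]

lemma le_measure_inter_cyl_div_iff (A : Set (ℕ → Bool)) (σ : List Bool) (t : ℝ≥0∞) :
    t ≤ μ (A ∩ cyl σ) / μ (cyl σ) ↔ t * μ (cyl σ) ≤ μ (A ∩ cyl σ) :=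
  ENNReal.le_div_iff_mul_le (Or.inl (measure_cyl_ne_zero hμ σ))
    (Or.inl (measure_cyl_ne_top hμ σ))

lemma measure_cyl_of_length_eq {σ τ : List Bool} {k : ℕ} (hlen : τ.length = σ.length + k) :
    μ (cyl τ) = 2⁻¹ ^ k * μ (cyl σ) := by
  rw [hμ, hμ, hlen, pow_add, mul_comm]

lemma exists_ne_extension_le_measure_inter_cyl (A : Set (ℕ → Bool)) (σ τ₁ : List Bool) (n : ℕ)
    (h : 2⁻¹ ^ n * μ (cyl σ) ≤ μ (A ∩ cyl σ)) (hlen₁ : τ₁.length = σ.length + (n + 1)) :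
    ∃ τ₂ : List Bool, τ₂ ≠ τ₁ ∧ σ <+: τ₂ ∧ τ₂.length = σ.length + (n + 1) ∧
      2⁻¹ ^ (n + 1) * μ (cyl τ₂) ≤ μ (A ∩ cyl τ₂) := by
  have hrest : 2⁻¹ ^ (n + 1) * μ (cyl σ) ≤ μ ((A \ cyl τ₁) ∩ cyl σ) := by
    refine le_measure_inter_sdiff (measure_cyl_ne_top hμ τ₁) ?_
    rwa [measure_cyl_of_length_eq hμ hlen₁, ← add_mul, inv_two_pow_succ_add_self]
  obtain ⟨τ₂, hpre, hlen, hτ₂⟩ := exists_extension_le_measure_inter_cyl μ _ _ σ (n + 1) hrest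
  refine ⟨τ₂, ?_, hpre, hlen, hτ₂.trans (measure_mono (Set.inter_subset_inter_left _
    Set.sdiff_subset))⟩
  rintro rfl
  rw [Set.sdiff_inter_self, measure_empty, nonpos_iff_eq_zero] at hτ₂
  exact mul_ne_zero (by simp) (measure_cyl_ne_zero hμ τ₂) hτ₂

end FairCoin

theorem stmt0_general (μ : Measure (ℕ → Bool))
    (hμ : ∀ σ : List Bool, μ (cyl σ) = (2 : ℝ≥0∞)⁻¹ ^ σ.length)
    (σ : List Bool) (n : ℕ) (A : Set (ℕ → Bool))
    (h : (2 : ℝ≥0∞)⁻¹ ^ n ≤ μ (A ∩ cyl σ) / μ (cyl σ)) :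
    ∃ τ₁ τ₂ : List Bool, τ₁ ≠ τ₂ ∧
      σ <+: τ₁ ∧ σ <+: τ₂ ∧
      τ₁.length = σ.length + n + 1 ∧ τ₂.length = σ.length + n + 1 ∧
      (2 : ℝ≥0∞)⁻¹ ^ (n + 1) ≤ μ (A ∩ cyl τ₁) / μ (cyl τ₁) ∧
      (2 : ℝ≥0∞)⁻¹ ^ (n + 1) ≤ μ (A ∩ cyl τ₂) / μ (cyl τ₂) := by
  simp only [le_measure_inter_cyl_div_iff hμ] at h ⊢
  obtain ⟨τ₁, hpre₁, hlen₁, hτ₁⟩ := exists_extension_le_measure_inter_cyl μ A _ σ (n + 1) h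
  obtain ⟨τ₂, hne, hpre₂, hlen₂, hτ₂⟩ :=
    exists_ne_extension_le_measure_inter_cyl hμ A σ τ₁ n h hlen₁
  have hweaken : (2 : ℝ≥0∞)⁻¹ ^ (n + 1) ≤ 2⁻¹ ^ n :=
    pow_le_pow_of_le_one zero_le (by simp) n.le_succ
  exact ⟨τ₁, τ₂, hne.symm, hpre₁, hpre₂, by omega, by omega,
    (mul_le_mul_left hweaken _).trans hτ₁, hτ₂⟩

/-- If `λ(𝒜 | σ) ≥ 2^{-n}` then there are two distinct extensions `τ₁, τ₂` of `σ` of length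
`|σ| + n + 1` with `λ(𝒜 | τᵢ) ≥ 2^{-(n+1)}`.  Here `μ` is the fair-coin measure on Cantor
space, characterized by its values `μ [σ] = 2^{-|σ|}` on cylinders. -/
theorem stmt0 (μ : Measure (ℕ → Bool))
    (hμ : ∀ σ : List Bool, μ (cyl σ) = (2 : ℝ≥0∞)⁻¹ ^ σ.length)
    (σ : List Bool) (n : ℕ) (A : Set (ℕ → Bool)) (hA : MeasurableSet A)
    (h : (2 : ℝ≥0∞)⁻¹ ^ n ≤ μ (A ∩ cyl σ) / μ (cyl σ)) :
    ∃ τ₁ τ₂ : List Bool, τ₁ ≠ τ₂ ∧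
      σ <+: τ₁ ∧ σ <+: τ₂ ∧
      τ₁.length = σ.length + n + 1 ∧ τ₂.length = σ.length + n + 1 ∧
      (2 : ℝ≥0∞)⁻¹ ^ (n + 1) ≤ μ (A ∩ cyl τ₁) / μ (cyl τ₁) ∧
      (2 : ℝ≥0∞)⁻¹ ^ (n + 1) ≤ μ (A ∩ cyl τ₂) / μ (cyl τ₂) :=
  stmt0_general μ hμ σ n A h
end

section
/- Define f on positive integers by f(1) = 0 and f(n+1) = f(n) + n + 1. Let 𝒜 ⊆ 2^ω be a measurable set with λ(𝒜) ≥ 1/2. Then for every n ≥ 1 and every string τ of length f(n) with λ(𝒜 | τ) ≥ 2^{-n}, there exist at least two distinct extensions σ of τ of length f(n+1) such that λ(𝒜 | σ) ≥ 2^{-(n+1)}. -/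
open MeasureTheory
open scoped ENNReal

/-!
The cylinder `[τ]` splits into the `2^(n+1)` cylinders of the extensions of `τ` of length
`f(n+1) = f(n) + n + 1`, each of measure `c = 2^{-f(n+1)}`, and `λ(𝒜 | τ) ≥ 2^{-n}` says exactly
that `λ(𝒜 ∩ [τ]) ≥ 2c`. The extensions with `λ(𝒜 | σ) < 2^{-(n+1)}` together carry less than
`2^(n+1) · 2^{-(n+1)} c = c`, so a single extension of mass at most `c` cannot make up the rest.
-/

theorem cyl_subset_iUnion_cyl_append (τ : List Bool) (k : ℕ) :
    cyl τ ⊆ ⋃ g : Fin k → Bool, cyl (τ ++ List.ofFn g) := by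
  intro X hX
  refine Set.mem_iUnion.mpr ⟨fun i => X (τ.length + i), ?_⟩
  change τ ++ _ = (List.range (τ ++ _).length).map X
  rw [List.length_append, List.length_ofFn, List.range_add, List.map_append, ← hX]
  congr 1
  exact List.ext_getElem (by simp) fun i _ _ => by simp

theorem measure_inter_cyl_le_sum (μ : Measure (ℕ → Bool)) (A : Set (ℕ → Bool))
    (τ : List Bool) (k : ℕ) :
    μ (A ∩ cyl τ) ≤ ∑ g : Fin k → Bool, μ (A ∩ cyl (τ ++ List.ofFn g)) :=
  calc μ (A ∩ cyl τ) ≤ μ (⋃ g : Fin k → Bool, A ∩ cyl (τ ++ List.ofFn g)) := by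
        rw [← Set.inter_iUnion]
        exact measure_mono (Set.inter_subset_inter_right A (cyl_subset_iUnion_cyl_append τ k))
    _ ≤ _ := measure_iUnion_fintype_le μ _

theorem exists_ne_le_of_two_mul_le_sum {ι : Type*} [Fintype ι] {x : ι → ℝ≥0∞} {c δ : ℝ≥0∞}
    (hc0 : c ≠ 0) (hc : c ≠ ⊤) (hδ : δ ≠ 0) (hcard : Fintype.card ι * δ ≤ c)
    (hx : ∀ i, x i ≤ c) (hsum : 2 * c ≤ ∑ i, x i) :
    ∃ i j, i ≠ j ∧ δ ≤ x i ∧ δ ≤ x j := by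
  classical
  by_contra! h
  set G := Finset.univ.filter fun i => δ ≤ x i
  have hG : G.card ≤ 1 := Finset.card_le_one.mpr fun i hi j hj => by
    by_contra hij
    exact (h i j hij (Finset.mem_filter.mp hi).2).not_ge (Finset.mem_filter.mp hj).2
  -- with at most one term reaching `δ`, the sum is at most `card ι * δ + (c - δ) ≤ c + (c - δ)`
  have hterm : ∀ i, x i ≤ δ + if δ ≤ x i then c - δ else 0 := by
    intro i
    split_ifs with hi
    · exact (hx i).trans le_add_tsub
    · simpa using (not_le.mp hi).le
  have hlt : c + (c - δ) < 2 * c := by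
    rw [two_mul]
    exact ENNReal.add_lt_add_left hc (ENNReal.sub_lt_self hc hc0 hδ)
  refine hlt.not_ge (hsum.trans ?_)
  calc ∑ i, x i ≤ ∑ i, (δ + if δ ≤ x i then c - δ else 0) := Finset.sum_le_sum fun i _ => hterm i
    _ = Fintype.card ι * δ + G.card * (c - δ) := by
        rw [Finset.sum_add_distrib, ← Finset.sum_filter]
        simp [G]
    _ ≤ c + 1 * (c - δ) := by gcongr; exact_mod_cast hG
    _ = c + (c - δ) := by rw [one_mul]

theorem stmt1_general (μ : Measure (ℕ → Bool))
    (hμ : ∀ σ : List Bool, μ (cyl σ) = (2 : ℝ≥0∞)⁻¹ ^ σ.length)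
    (f : ℕ → ℕ) (hf : ∀ n : ℕ, 1 ≤ n → f (n + 1) = f n + n + 1)
    (A : Set (ℕ → Bool)) :
    ∀ n : ℕ, 1 ≤ n → ∀ τ : List Bool, τ.length = f n →
      (2 : ℝ≥0∞)⁻¹ ^ n ≤ μ (A ∩ cyl τ) / μ (cyl τ) →
      ∃ σ₁ σ₂ : List Bool, σ₁ ≠ σ₂ ∧ τ <+: σ₁ ∧ τ <+: σ₂ ∧
        σ₁.length = f (n + 1) ∧ σ₂.length = f (n + 1) ∧
        (2 : ℝ≥0∞)⁻¹ ^ (n + 1) ≤ μ (A ∩ cyl σ₁) / μ (cyl σ₁) ∧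
        (2 : ℝ≥0∞)⁻¹ ^ (n + 1) ≤ μ (A ∩ cyl σ₂) / μ (cyl σ₂) := by
  intro n hn τ hτ hcond
  have hlen : ∀ g : Fin (n + 1) → Bool, (τ ++ List.ofFn g).length = f (n + 1) := fun g => by
    rw [List.length_append, List.length_ofFn, hτ, hf n hn, add_assoc]
  set c : ℝ≥0∞ := 2⁻¹ ^ f (n + 1) with hc_def
  have hc0 : c ≠ 0 := pow_ne_zero _ (by simp)
  have hc : c ≠ ⊤ := ENNReal.pow_ne_top (by simp)
  have hcyl : ∀ g : Fin (n + 1) → Bool, μ (cyl (τ ++ List.ofFn g)) = c := fun g => by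
    rw [hμ, hlen]
  have hmass : 2 * c ≤ μ (A ∩ cyl τ) := by
    rw [hμ, hτ, ENNReal.le_div_iff_mul_le (Or.inl (pow_ne_zero _ (by simp)))
      (Or.inl (ENNReal.pow_ne_top (by simp)))] at hcond
    calc 2 * c = 2⁻¹ ^ n * 2⁻¹ ^ f n := by
          rw [hc_def, hf n hn, pow_succ, mul_left_comm,
            ENNReal.mul_inv_cancel two_ne_zero ENNReal.ofNat_ne_top, mul_one, pow_add, mul_comm]
      _ ≤ μ (A ∩ cyl τ) := hcond
  have hcard : Fintype.card (Fin (n + 1) → Bool) * (2⁻¹ ^ (n + 1) * c) ≤ c := by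
    simp [← mul_assoc, ← mul_pow, ENNReal.mul_inv_cancel]
  obtain ⟨g₁, g₂, hne, hg₁, hg₂⟩ := exists_ne_le_of_two_mul_le_sum hc0 hc
    (mul_ne_zero (pow_ne_zero _ (by simp)) hc0) hcard
    (fun g => (measure_mono Set.inter_subset_right).trans (hcyl g).le)
    (hmass.trans (measure_inter_cyl_le_sum μ A τ (n + 1)))
  refine ⟨τ ++ List.ofFn g₁, τ ++ List.ofFn g₂,
    fun h => hne (List.ofFn_injective (List.append_cancel_left h)),
    List.prefix_append _ _, List.prefix_append _ _, hlen g₁, hlen g₂, ?_, ?_⟩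
  · rwa [hcyl, ENNReal.le_div_iff_mul_le (Or.inl hc0) (Or.inl hc)]
  · rwa [hcyl, ENNReal.le_div_iff_mul_le (Or.inl hc0) (Or.inl hc)]

/-- Let `f(1) = 0` and `f(n+1) = f(n) + n + 1`, and let `𝒜` be measurable with `λ(𝒜) ≥ 1/2`.
Then for every `n ≥ 1` and every string `τ` of length `f(n)` with `λ(𝒜 | τ) ≥ 2^{-n}`,
there are at least two distinct extensions `σ` of `τ` of length `f(n+1)` with
`λ(𝒜 | σ) ≥ 2^{-(n+1)}`.  Here `μ` is the fair-coin measure on Cantor space,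
characterized by its values `μ [σ] = 2^{-|σ|}` on cylinders. -/
theorem stmt1 (μ : Measure (ℕ → Bool))
    (hμ : ∀ σ : List Bool, μ (cyl σ) = (2 : ℝ≥0∞)⁻¹ ^ σ.length)
    (f : ℕ → ℕ) (hf1 : f 1 = 0) (hf : ∀ n : ℕ, 1 ≤ n → f (n + 1) = f n + n + 1)
    (A : Set (ℕ → Bool)) (hA : MeasurableSet A) (hA2 : (2 : ℝ≥0∞)⁻¹ ≤ μ A) :
    ∀ n : ℕ, 1 ≤ n → ∀ τ : List Bool, τ.length = f n →
      (2 : ℝ≥0∞)⁻¹ ^ n ≤ μ (A ∩ cyl τ) / μ (cyl τ) →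
      ∃ σ₁ σ₂ : List Bool, σ₁ ≠ σ₂ ∧ τ <+: σ₁ ∧ τ <+: σ₂ ∧
        σ₁.length = f (n + 1) ∧ σ₂.length = f (n + 1) ∧
        (2 : ℝ≥0∞)⁻¹ ^ (n + 1) ≤ μ (A ∩ cyl σ₁) / μ (cyl σ₁) ∧
        (2 : ℝ≥0∞)⁻¹ ^ (n + 1) ≤ μ (A ∩ cyl σ₂) / μ (cyl σ₂) :=
  stmt1_general μ hμ f hf A
end

section
/- Let T be a perfect pruned tree. Then the set M of minimal nodes of T of the form ψ_T(σ⌢1) for strings σ of odd length is infinite, forms an antichain (its elements are pairwise incomparable), and every element of M properly extends stem(T). -/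
open scoped Classical

/-- A tree is a set of finite binary strings closed under initial segments. -/
def IsTree (T : Set (List Bool)) : Prop :=
  ∀ s t : List Bool, s <+: t → t ∈ T → s ∈ T

/-- `[T]`, the set of infinite paths of `T`: those `X` all of whose initial segments
are in `T`. -/
def treePaths (T : Set (List Bool)) : Set (ℕ → Bool) :=
  {X | ∀ n : ℕ, (List.range n).map X ∈ T}

/-- `T` is pruned: every node has a proper extension in `T`. -/
def Pruned (T : Set (List Bool)) : Prop :=
  ∀ s ∈ T, ∃ t ∈ T, s <+: t ∧ s ≠ t

/-- Two strings are incomparable if neither is an initial segment of the other. -/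
def Incomparable (s t : List Bool) : Prop := ¬ s <+: t ∧ ¬ t <+: s

/-- `T` is perfect: every node of `T` has two incomparable extensions in `T`. -/
def PerfectTree (T : Set (List Bool)) : Prop :=
  ∀ s ∈ T, ∃ t₁ ∈ T, ∃ t₂ ∈ T, s <+: t₁ ∧ s <+: t₂ ∧ Incomparable t₁ t₂

/-- A (nonempty) perfect pruned tree. -/
def PPTree (T : Set (List Bool)) : Prop :=
  T.Nonempty ∧ IsTree T ∧ Pruned T ∧ PerfectTree T

/-- `s` is a branching node of `T`: both children `s⌢0` and `s⌢1` are in `T`. -/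
def Branching (T : Set (List Bool)) (s : List Bool) : Prop :=
  s ∈ T ∧ s ++ [false] ∈ T ∧ s ++ [true] ∈ T

/-- `s` is a shortest branching node of `T`. -/
def IsStem (T : Set (List Bool)) (s : List Bool) : Prop :=
  Branching T s ∧ ∀ t : List Bool, Branching T t → s.length ≤ t.length

/-- `stem T`: the shortest branching node of `T` (unique for a perfect pruned tree). -/
noncomputable def stem (T : Set (List Bool)) : List Bool :=
  if h : ∃ s, IsStem T s then h.choose else []

/-- The shortest branching node of `T` extending `ρ`
(unique for a perfect pruned tree when `ρ ∈ T`). -/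
noncomputable def nextBranch (T : Set (List Bool)) (ρ : List Bool) : List Bool :=
  if h : ∃ s : List Bool, ρ <+: s ∧ Branching T s ∧
      ∀ t : List Bool, ρ <+: t → Branching T t → s.length ≤ t.length then
    h.choose
  else ρ

/-- `ψ_T`, the order-preserving map onto the branching nodes of `T`:
`ψ_T(ε) = stem(T)` and `ψ_T(σ⌢i)` is the shortest branching node of `T`
extending `ψ_T(σ)⌢i`. -/
noncomputable def psi (T : Set (List Bool)) (σ : List Bool) : List Bool :=
  σ.foldl (fun τ i => nextBranch T (τ ++ [i])) (stem T)

/-- `τ` is of the form `ψ_T(σ⌢1)` for a string `σ` of odd length. -/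
def FormNode (T : Set (List Bool)) (τ : List Bool) : Prop :=
  ∃ σ : List Bool, Odd σ.length ∧ τ = psi T (σ ++ [true])

/-- The set of nodes `σ_k(T)`, `k ∈ ℕ`: the minimal nodes of `T` of the form
`ψ_T(σ⌢1)` for `σ` of odd length (no proper initial segment is of this form). -/
def sigmaSet (T : Set (List Bool)) : Set (List Bool) :=
  {τ | FormNode T τ ∧ ∀ ρ : List Bool, ρ <+: τ → ρ ≠ τ → ¬ FormNode T ρ}

/-- `Nar(T)`, the narrow subtree of `T`: the nodes lying on some path of `T`
passing through no `σ_k(T)`. -/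
def Nar (T : Set (List Bool)) : Set (List Bool) :=
  {τ | τ ∈ T ∧ ∃ X ∈ treePaths T, PrefixOf τ X ∧ ∀ ρ ∈ sigmaSet T, ¬ PrefixOf ρ X}

/-- `T⟦ρ⟧`, the full subtree of `T` issuing from `ρ`: the nodes of `T`
comparable with `ρ`. -/
def fullSub (T : Set (List Bool)) (ρ : List Bool) : Set (List Bool) :=
  {τ ∈ T | ρ <+: τ ∨ τ <+: ρ}

section Aux

variable {T : Set (List Bool)}

lemma min_length_exists {P : List Bool → Prop} (h : ∃ s, P s) :
    ∃ s, P s ∧ ∀ t, P t → s.length ≤ t.length := by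
  have h2 : ∃ n, ∃ s, P s ∧ s.length = n := ⟨_, h.choose, h.choose_spec, rfl⟩
  obtain ⟨t, ht, hlen⟩ := Nat.find_spec h2
  exact ⟨t, ht, fun u hu => hlen ▸ Nat.find_min' h2 ⟨u, hu, rfl⟩⟩

lemma split_cases (s : List Bool) : ∀ t : List Bool, s <+: t ∨ t <+: s ∨
    ∃ c b, c ++ [b] <+: s ∧ c ++ [!b] <+: t ∧ ∀ u, u <+: s → u <+: t → u <+: c := by
  induction s with
  | nil => intro t; exact Or.inl (List.nil_prefix)
  | cons a s ih =>
    intro t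
    cases t with
    | nil => exact Or.inr (Or.inl List.nil_prefix)
    | cons b t =>
      by_cases hab : a = b
      · subst hab
        rcases ih t with h | h | ⟨c, x, h1, h2, h3⟩
        · exact Or.inl (by simpa [List.cons_prefix_cons] using h)
        · exact Or.inr (Or.inl (by simpa [List.cons_prefix_cons] using h))
        · refine Or.inr (Or.inr ⟨a :: c, x, ?_, ?_, ?_⟩)
          · simpa [List.cons_prefix_cons] using h1
          · simpa [List.cons_prefix_cons] using h2
          · intro u hu1 hu2
            cases u with
            | nil => exact List.nil_prefix
            | cons y u =>
              rw [List.cons_prefix_cons] at hu1 hu2 ⊢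
              exact ⟨hu1.1, h3 u hu1.2 hu2.2⟩
      · refine Or.inr (Or.inr ⟨[], a, ?_, ?_, ?_⟩)
        · simp [List.cons_prefix_cons]
        · have : b = !a := by cases a <;> cases b <;> simp_all
          simp [this, List.cons_prefix_cons]
        · intro u hu1 hu2
          cases u with
          | nil => exact List.nil_prefix
          | cons y u =>
            rw [List.cons_prefix_cons] at hu1 hu2
            exact absurd (hu1.1.symm.trans hu2.1) hab

lemma incomp_of_split {c : List Bool} {b : Bool} {s t : List Bool}
    (hs : c ++ [b] <+: s) (ht : c ++ [!b] <+: t) : Incomparable s t := by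
  have key : ∀ (c : List Bool) (b : Bool) (u : List Bool),
      c ++ [b] <+: u → c ++ [!b] <+: u → False := by
    intro c b u h1 h2
    have hc := List.prefix_of_prefix_length_le h1 h2 (by simp)
    have := hc.eq_of_length (by simp)
    simp at this
  constructor
  · intro h; exact key c b t (hs.trans h) ht
  · intro h; exact key c (!b) s (by simpa using ht.trans h) (by simpa using hs)

lemma exists_branch_ext (hT : PPTree T) {ρ : List Bool} (hρ : ρ ∈ T) :
    ∃ s, ρ <+: s ∧ Branching T s := by
  obtain ⟨hne, htree, hpr, hperf⟩ := hT
  obtain ⟨t₁, ht₁, t₂, ht₂, hp₁, hp₂, hinc⟩ := hperf ρ hρ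
  rcases split_cases t₁ t₂ with h | h | ⟨c, b, h1, h2, h3⟩
  · exact absurd h hinc.1
  · exact absurd h hinc.2
  refine ⟨c, h3 ρ hp₁ hp₂, ?_, ?_, ?_⟩
  · exact htree c t₁ ((List.prefix_append c [b]).trans h1) ht₁
  · cases b
    · exact htree _ t₁ h1 ht₁
    · exact htree _ t₂ (by simpa using h2) ht₂
  · cases b
    · exact htree _ t₂ (by simpa using h2) ht₂
    · exact htree _ t₁ h1 ht₁

lemma nextBranch_spec (hT : PPTree T) {ρ : List Bool} (hρ : ρ ∈ T) :
    ρ <+: nextBranch T ρ ∧ Branching T (nextBranch T ρ) := by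
  have hex : ∃ s : List Bool, (ρ <+: s ∧ Branching T s) := exists_branch_ext hT hρ
  have h : ∃ s : List Bool, ρ <+: s ∧ Branching T s ∧
      ∀ t : List Bool, ρ <+: t → Branching T t → s.length ≤ t.length := by
    obtain ⟨s, ⟨hp, hb⟩, hmin⟩ := min_length_exists hex
    exact ⟨s, hp, hb, fun t h1 h2 => hmin t ⟨h1, h2⟩⟩
  rw [nextBranch, dif_pos h]
  exact ⟨h.choose_spec.1, h.choose_spec.2.1⟩

lemma stem_branching (hT : PPTree T) : Branching T (stem T) := by
  have hex : ∃ s, IsStem T s := by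
    obtain ⟨ρ, hρ⟩ := hT.1
    obtain ⟨s, _, hb⟩ := exists_branch_ext hT hρ
    obtain ⟨s', hs', hmin⟩ := min_length_exists ⟨s, hb⟩
    exact ⟨s', hs', hmin⟩
  rw [stem, dif_pos hex]
  exact hex.choose_spec.1

lemma psi_fold (hT : PPTree T) (σ : List Bool) : ∀ τ : List Bool, Branching T τ →
    Branching T (σ.foldl (fun τ i => nextBranch T (τ ++ [i])) τ) ∧
    τ <+: σ.foldl (fun τ i => nextBranch T (τ ++ [i])) τ ∧
    (σ ≠ [] → τ.length < (σ.foldl (fun τ i => nextBranch T (τ ++ [i])) τ).length) := by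
  induction σ with
  | nil => intro τ h; exact ⟨h, List.prefix_refl _, by simp⟩
  | cons i σ ih =>
    intro τ h
    have hmem : τ ++ [i] ∈ T := by cases i; exacts [h.2.1, h.2.2]
    obtain ⟨hpre, hbr⟩ := nextBranch_spec hT hmem
    obtain ⟨h1, h2, _⟩ := ih (nextBranch T (τ ++ [i])) hbr
    simp only [List.foldl_cons]
    refine ⟨h1, ((List.prefix_append τ [i]).trans hpre).trans h2, fun _ => ?_⟩
    calc τ.length < (τ ++ [i]).length := by simp
      _ ≤ (nextBranch T (τ ++ [i])).length := hpre.length_le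
      _ ≤ _ := h2.length_le

lemma psi_branching (hT : PPTree T) (σ : List Bool) : Branching T (psi T σ) :=
  (psi_fold hT σ _ (stem_branching hT)).1

lemma psi_mono (hT : PPTree T) (α μ : List Bool) :
    psi T α <+: psi T (α ++ μ) ∧ (μ ≠ [] → (psi T α).length < (psi T (α ++ μ)).length) := by
  have : psi T (α ++ μ) = μ.foldl (fun τ i => nextBranch T (τ ++ [i])) (psi T α) := by
    simp [psi, List.foldl_append]
  rw [this]
  obtain ⟨_, h2, h3⟩ := psi_fold hT μ _ (psi_branching hT α)
  exact ⟨h2, h3⟩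

lemma psi_step (hT : PPTree T) (α : List Bool) (b : Bool) :
    psi T α ++ [b] <+: psi T (α ++ [b]) := by
  have hmem : psi T α ++ [b] ∈ T := by
    cases b; exacts [(psi_branching hT α).2.1, (psi_branching hT α).2.2]
  have : psi T (α ++ [b]) = nextBranch T (psi T α ++ [b]) := by
    simp [psi, List.foldl_append]
  rw [this]
  exact (nextBranch_spec hT hmem).1

lemma psi_incomp (hT : PPTree T) {c : List Bool} {b : Bool} {α β : List Bool}
    (h1 : c ++ [b] <+: α) (h2 : c ++ [!b] <+: β) :
    Incomparable (psi T α) (psi T β) := by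
  obtain ⟨μ, rfl⟩ := h1
  obtain ⟨ν, rfl⟩ := h2
  refine incomp_of_split (c := psi T c) (b := b) ?_ ?_
  · exact (psi_step hT c b).trans (psi_mono hT (c ++ [b]) μ).1
  · exact (psi_step hT c (!b)).trans (psi_mono hT (c ++ [!b]) ν).1

lemma psi_reflect (hT : PPTree T) {α β : List Bool} (h : psi T α <+: psi T β) :
    α <+: β := by
  rcases split_cases α β with h' | h' | ⟨c, b, h1, h2, _⟩
  · exact h'
  · obtain ⟨μ, rfl⟩ := h'
    rcases eq_or_ne μ [] with rfl | hμ
    · simp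
    · have := (psi_mono hT β μ).2 hμ
      exact absurd h.length_le (by omega)
  · exact absurd h (psi_incomp hT h1 h2).1

lemma tau_mem (hT : PPTree T) (k : ℕ) :
    psi T (List.replicate (2 * k) false ++ [true, true]) ∈ sigmaSet T := by
  constructor
  · refine ⟨List.replicate (2 * k) false ++ [true], by simp [Nat.odd_iff], ?_⟩
    congr 1
    simp
  · rintro ρ hpre hne ⟨σ', hodd, rfl⟩
    have hp : σ' ++ [true] <+: List.replicate (2 * k) false ++ [true, true] :=
      psi_reflect hT hpre
    obtain ⟨μ, hμ⟩ := hp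
    have hp : σ' ++ [true] <+: List.replicate (2 * k) false ++ [true, true] := ⟨μ, hμ⟩
    rcases eq_or_ne μ [] with rfl | hμne
    · simp only [List.append_nil] at hμ
      exact hne (by rw [hμ])
    · have hμlen : 1 ≤ μ.length := by
        cases μ with
        | nil => exact absurd rfl hμne
        | cons a l => simp
      have hlen : σ'.length + 1 + μ.length = 2 * k + 2 := by
        have := congrArg List.length hμ
        simp at this
        omega
      have hn1 : σ'.length < (σ' ++ [true]).length := by simp
      have hn2 : σ'.length < (List.replicate (2 * k) false ++ [true, true]).length := by
        simp; omega
      have hTtrue : (σ' ++ [true])[σ'.length]'hn1 = true := by simp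
      have heq : σ'.length = 2 * k := by
        by_contra hne2
        have hlt : σ'.length < 2 * k := by omega
        have hF : (List.replicate (2 * k) false ++ [true, true])[σ'.length]'hn2 = false := by
          rw [List.getElem_append_left (by simpa using hlt)]
          simp
        have hcon : (true : Bool) = false :=
          hTtrue.symm.trans ((List.IsPrefix.getElem hp hn1).trans hF)
        simp at hcon
      rw [heq] at hodd
      simp [Nat.odd_iff] at hodd

end Aux

/-- The set of nodes `σ_k(T)` of a perfect pruned tree `T` is infinite, is an antichain,
and every element properly extends `stem(T)`. -/
theorem stmt9 (T : Set (List Bool)) (hT : PPTree T) :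
    (sigmaSet T).Infinite ∧
      (∀ s ∈ sigmaSet T, ∀ t ∈ sigmaSet T, s ≠ t → Incomparable s t) ∧
      (∀ τ ∈ sigmaSet T, stem T <+: τ ∧ stem T ≠ τ) := by
  obtain ⟨hne, htree, hpr, hperf⟩ := hT
  have hT' : PPTree T := ⟨hne, htree, hpr, hperf⟩
  refine ⟨?_, ?_, ?_⟩
  · refine Set.infinite_of_injective_forall_mem
      (f := fun k => psi T (List.replicate (2 * k) false ++ [true, true])) ?_ (tau_mem hT')
    intro j k hjk
    simp only at hjk
    have h1 : List.replicate (2 * j) false ++ [true, true] <+: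
        List.replicate (2 * k) false ++ [true, true] := by
      apply psi_reflect hT'
      rw [hjk]
    have h2 : List.replicate (2 * k) false ++ [true, true] <+:
        List.replicate (2 * j) false ++ [true, true] := by
      apply psi_reflect hT'
      rw [hjk]
    have := congrArg List.length (h1.eq_of_length (le_antisymm h1.length_le h2.length_le))
    simp at this
    omega
  · intro s hs t ht hst
    constructor
    · intro h
      exact ht.2 s h hst hs.1
    · intro h
      exact hs.2 t h (Ne.symm hst) ht.1
  · rintro τ ⟨⟨σ, hodd, rfl⟩, -⟩
    have h := psi_mono hT' [] (σ ++ [true])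
    simp only [List.nil_append] at h
    have hstem : stem T = psi T [] := rfl
    rw [hstem]
    refine ⟨h.1, fun heq => ?_⟩
    have := h.2 (by simp)
    rw [heq] at this
    omega
end

section
/- Let T be a perfect pruned tree, and let σ_0(T), σ_1(T), … enumerate the minimal nodes of T of the form ψ_T(σ⌢1) for σ of odd length. Then Nar(T) is a perfect pruned subtree of T, stem(Nar(T)) = stem(T), and no σ_k(T) belongs to Nar(T). -/
open scoped Classical

namespace Stmt10Aux

lemma prefixOf_range (X : ℕ → Bool) (n : ℕ) : PrefixOf ((List.range n).map X) X := by
  unfold PrefixOf; simp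

lemma prefixOf_mono {ρ τ : List Bool} {X : ℕ → Bool} (h : ρ <+: τ) (hτ : PrefixOf τ X) :
    PrefixOf ρ X := by
  unfold PrefixOf at *
  have h1 : ρ = τ.take ρ.length := by
    obtain ⟨u, rfl⟩ := h
    simp
  have hl : ρ.length ≤ τ.length := h.length_le
  calc ρ = τ.take ρ.length := h1
    _ = ((List.range τ.length).map X).take ρ.length := by rw [← hτ]
    _ = (List.range ρ.length).map X := by
        rw [← List.map_take, List.take_range, min_eq_left hl]

lemma prefixOf_prefix {ρ τ : List Bool} {X : ℕ → Bool} (hρ : PrefixOf ρ X) (hτ : PrefixOf τ X)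
    (h : ρ.length ≤ τ.length) : ρ <+: τ := by
  unfold PrefixOf at *
  have : ρ = τ.take ρ.length := by
    rw [hτ, ← List.map_take, List.take_range, min_eq_left h, ← hρ]
  rw [this]; exact τ.take_prefix _

lemma prefixOf_snoc {τ : List Bool} {X : ℕ → Bool} (h : PrefixOf τ X) :
    PrefixOf (τ ++ [X τ.length]) X := by
  unfold PrefixOf at *
  have h2 : (List.range (τ.length + 1)).map X = (List.range τ.length).map X ++ [X τ.length] := by
    rw [List.range_succ]; simp
  have h3 : τ ++ [X τ.length] = (List.range (τ.length + 1)).map X := by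
    rw [h2, ← h]
  simpa using h3

lemma prefixOf_getElem {τ : List Bool} {X : ℕ → Bool} (h : PrefixOf τ X) {i : ℕ}
    (hi : i < τ.length) : τ[i] = X i := by
  unfold PrefixOf at h
  rw [List.getElem_of_eq h hi]
  simp

lemma meet {a b : List Bool} (h : ¬ a <+: b) (h' : ¬ b <+: a) :
    ∃ μ x y, x ≠ y ∧ μ ++ [x] <+: a ∧ μ ++ [y] <+: b := by
  induction a generalizing b with
  | nil => exact absurd List.nil_prefix h
  | cons i a ih =>
    cases b with
    | nil => exact absurd List.nil_prefix h'
    | cons j b =>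
      by_cases hij : i = j
      · subst hij
        have h1 : ¬ a <+: b := fun hp => h (List.cons_prefix_cons.mpr ⟨rfl, hp⟩)
        have h2 : ¬ b <+: a := fun hp => h' (List.cons_prefix_cons.mpr ⟨rfl, hp⟩)
        obtain ⟨μ, x, y, hxy, hxa, hyb⟩ := ih h1 h2
        exact ⟨i :: μ, x, y, hxy, List.cons_prefix_cons.mpr ⟨rfl, hxa⟩,
          List.cons_prefix_cons.mpr ⟨rfl, hyb⟩⟩
      · exact ⟨[], i, j, hij, List.cons_prefix_cons.mpr ⟨rfl, List.nil_prefix⟩,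
          List.cons_prefix_cons.mpr ⟨rfl, List.nil_prefix⟩⟩

lemma meet_above {s a b μ : List Bool} {x y : Bool} (hsa : s <+: a) (hsb : s <+: b)
    (hxy : x ≠ y) (hxa : μ ++ [x] <+: a) (hyb : μ ++ [y] <+: b) : s <+: μ := by
  have key : ¬ (μ ++ [x] <+: b) := by
    intro hxb
    have heq : μ ++ [x] = μ ++ [y] := by
      rcases List.prefix_or_prefix_of_prefix hxb hyb with hc | hc
      · exact hc.eq_of_length (by simp)
      · exact (hc.eq_of_length (by simp)).symm
    exact hxy (by simpa using heq)
  rcases List.prefix_or_prefix_of_prefix hsa hxa with hc | hc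
  · rcases Nat.lt_or_ge s.length (μ ++ [x]).length with hl | hl
    · have hsμ : s.length ≤ μ.length := Nat.lt_succ_iff.mp (by simpa using hl)
      rcases List.prefix_or_prefix_of_prefix hc (List.prefix_append μ [x]) with hd | hd
      · exact hd
      · have he : μ = s := hd.eq_of_length (le_antisymm hd.length_le hsμ)
        rw [← he]
    · have he : s = μ ++ [x] := hc.eq_of_length (le_antisymm hc.length_le hl)
      exact absurd (he ▸ hsb) key
  · exact absurd (hc.trans hsb) key

variable {T : Set (List Bool)}

lemma branch_meet (htree : IsTree T) {t₁ t₂ s : List Bool} (h₁ : t₁ ∈ T) (h₂ : t₂ ∈ T)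
    (hinc : Incomparable t₁ t₂) (hs₁ : s <+: t₁) (hs₂ : s <+: t₂) :
    ∃ μ, s <+: μ ∧ Branching T μ ∧ μ.length < t₁.length ∧ μ.length < t₂.length := by
  obtain ⟨μ, x, y, hxy, hxa, hyb⟩ := meet hinc.1 hinc.2
  refine ⟨μ, meet_above hs₁ hs₂ hxy hxa hyb, ?_, ?_, ?_⟩
  · have hμx : μ ++ [x] ∈ T := htree _ _ hxa h₁
    have hμy : μ ++ [y] ∈ T := htree _ _ hyb h₂
    have hμ : μ ∈ T := htree _ _ (List.prefix_append μ [x]) hμx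
    refine ⟨hμ, ?_, ?_⟩ <;> rcases x <;> rcases y <;> simp_all
  · simpa using Nat.lt_of_lt_of_le (by simp) hxa.length_le
  · simpa using Nat.lt_of_lt_of_le (by simp) hyb.length_le

lemma exists_branching_above (hT : PPTree T) {s : List Bool} (hs : s ∈ T) :
    ∃ μ, s <+: μ ∧ Branching T μ := by
  obtain ⟨t₁, h₁, t₂, h₂, hp₁, hp₂, hinc⟩ := hT.2.2.2 s hs
  obtain ⟨μ, hμ, hbr, -⟩ := branch_meet hT.2.1 h₁ h₂ hinc hp₁ hp₂
  exact ⟨μ, hμ, hbr⟩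

lemma exists_isStem (hT : PPTree T) : ∃ s, IsStem T s := by
  obtain ⟨s₀, hs₀⟩ := hT.1
  obtain ⟨μ, -, hμ⟩ := exists_branching_above hT hs₀
  have hP : ∃ n, ∃ t : List Bool, Branching T t ∧ t.length = n := ⟨μ.length, μ, hμ, rfl⟩
  classical
  obtain ⟨t, ht, htl⟩ := Nat.find_spec hP
  refine ⟨t, ht, fun u hu => ?_⟩
  rw [htl]
  exact Nat.find_le ⟨u, hu, rfl⟩

lemma stem_isStem (hT : PPTree T) : IsStem T (stem T) := by
  have h := exists_isStem hT
  unfold stem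
  rw [dif_pos h]
  exact h.choose_spec

lemma exists_nb (hT : PPTree T) {ρ : List Bool} (hρ : ρ ∈ T) :
    ∃ s : List Bool, ρ <+: s ∧ Branching T s ∧
      ∀ t : List Bool, ρ <+: t → Branching T t → s.length ≤ t.length := by
  obtain ⟨μ, hμp, hμ⟩ := exists_branching_above hT hρ
  have hP : ∃ n, ∃ t : List Bool, (ρ <+: t ∧ Branching T t) ∧ t.length = n :=
    ⟨μ.length, μ, ⟨hμp, hμ⟩, rfl⟩
  classical
  obtain ⟨t, ⟨ht1, ht2⟩, htl⟩ := Nat.find_spec hP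
  refine ⟨t, ht1, ht2, fun u hu1 hu2 => ?_⟩
  rw [htl]
  exact Nat.find_le ⟨u, ⟨hu1, hu2⟩, rfl⟩

lemma nb_spec (hT : PPTree T) {ρ : List Bool} (hρ : ρ ∈ T) :
    ρ <+: nextBranch T ρ ∧ Branching T (nextBranch T ρ) ∧
      ∀ t : List Bool, ρ <+: t → Branching T t → (nextBranch T ρ).length ≤ t.length := by
  have h := exists_nb hT hρ
  unfold nextBranch
  rw [dif_pos h]
  exact h.choose_spec

lemma nb_prefix_of_branching (hT : PPTree T) {ρ β : List Bool} (hρ : ρ ∈ T)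
    (hβ : Branching T β) (h : ρ <+: β) : nextBranch T ρ <+: β := by
  obtain ⟨h1, h2, h3⟩ := nb_spec hT hρ
  by_cases hc : nextBranch T ρ <+: β
  · exact hc
  by_cases hc' : β <+: nextBranch T ρ
  · have he : β = nextBranch T ρ := hc'.eq_of_length (le_antisymm hc'.length_le (h3 β h hβ))
    rw [he]
  · obtain ⟨μ, hμp, hμbr, hμl, -⟩ := branch_meet hT.2.1 h2.1 hβ.1 ⟨hc, hc'⟩ h1 h
    exact absurd (h3 μ hμp hμbr) (by omega)


lemma stem_prefixOf_path (hT : PPTree T) {X : ℕ → Bool} (hX : X ∈ treePaths T) :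
    PrefixOf (stem T) X := by
  obtain ⟨hbr, hmin⟩ := stem_isStem hT
  set χ : List Bool := (List.range (stem T).length).map X with hχ
  have hχT : χ ∈ T := hX _
  have hχl : χ.length = (stem T).length := by simp [hχ]
  by_cases he : χ = stem T
  · rw [← he]; exact prefixOf_range X _
  · exfalso
    have hinc : Incomparable χ (stem T) := by
      constructor <;> intro hp <;>
        exact he (by
          first
          | exact hp.eq_of_length hχl
          | exact (hp.eq_of_length hχl.symm).symm)
    obtain ⟨μ, -, hμbr, hμl, -⟩ :=
      branch_meet hT.2.1 hχT hbr.1 hinc List.nil_prefix List.nil_prefix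
    exact absurd (hmin μ hμbr) (by omega)

lemma prefixOf_mem (htree : IsTree T) {ρ : List Bool} {X : ℕ → Bool} (hX : X ∈ treePaths T)
    (hρ : PrefixOf ρ X) : ρ ∈ T := by
  have : ρ = (List.range ρ.length).map X := hρ
  rw [this]; exact hX _

lemma nb_prefixOf_path (hT : PPTree T) {ρ : List Bool} {X : ℕ → Bool} (hX : X ∈ treePaths T)
    (hρ : PrefixOf ρ X) : PrefixOf (nextBranch T ρ) X := by
  have hρT : ρ ∈ T := prefixOf_mem hT.2.1 hX hρ
  obtain ⟨h1, h2, h3⟩ := nb_spec hT hρT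
  set χ : List Bool := (List.range (nextBranch T ρ).length).map X with hχ
  have hχT : χ ∈ T := hX _
  have hχX : PrefixOf χ X := prefixOf_range X _
  have hχl : χ.length = (nextBranch T ρ).length := by simp [hχ]
  have hρχ : ρ <+: χ := prefixOf_prefix hρ hχX (by rw [hχl]; exact h1.length_le)
  by_cases he : χ = nextBranch T ρ
  · rw [← he]; exact hχX
  · exfalso
    have hinc : Incomparable χ (nextBranch T ρ) := by
      constructor <;> intro hp <;>
        exact he (by
          first
          | exact hp.eq_of_length hχl
          | exact (hp.eq_of_length hχl.symm).symm)
    obtain ⟨μ, hμp, hμbr, hμl, -⟩ := branch_meet hT.2.1 hχT h2.1 hinc hρχ h1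
    exact absurd (h3 μ hμp hμbr) (by omega)

/-! ### psiFrom -/

noncomputable def psiFrom (T : Set (List Bool)) (γ : List Bool) (s : List Bool) : List Bool :=
  s.foldl (fun τ i => nextBranch T (τ ++ [i])) γ

lemma psi_eq_psiFrom (s : List Bool) : psi T s = psiFrom T (stem T) s := rfl

lemma psiFrom_nil (γ : List Bool) : psiFrom T γ [] = γ := rfl

lemma psiFrom_cons (γ : List Bool) (i : Bool) (s : List Bool) :
    psiFrom T γ (i :: s) = psiFrom T (nextBranch T (γ ++ [i])) s := rfl

lemma psiFrom_concat (γ : List Bool) (s : List Bool) (i : Bool) :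
    psiFrom T γ (s ++ [i]) = nextBranch T (psiFrom T γ s ++ [i]) := by
  simp [psiFrom]

lemma psiFrom_spec (hT : PPTree T) {γ : List Bool} (hγ : Branching T γ) (s : List Bool) :
    Branching T (psiFrom T γ s) ∧ γ <+: psiFrom T γ s ∧
      γ.length + s.length ≤ (psiFrom T γ s).length := by
  induction s generalizing γ with
  | nil => exact ⟨hγ, List.prefix_rfl, by simp [psiFrom_nil]⟩
  | cons i s ih =>
    have hγi : γ ++ [i] ∈ T := by rcases i <;> [exact hγ.2.1; exact hγ.2.2]
    obtain ⟨h1, h2, -⟩ := nb_spec hT hγi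
    obtain ⟨ih1, ih2, ih3⟩ := ih h2
    rw [psiFrom_cons]
    refine ⟨ih1, ((List.prefix_append γ [i]).trans h1).trans ih2, ?_⟩
    have : γ.length + 1 ≤ (nextBranch T (γ ++ [i])).length := by simpa using h1.length_le
    simp only [List.length_cons]
    omega

lemma psiFrom_le (hT : PPTree T) {γ : List Bool} (hγ : Branching T γ) (s u : List Bool) :
    psiFrom T γ s <+: psiFrom T γ (s ++ u) := by
  induction u using List.reverseRecOn with
  | nil => simp
  | append_singleton u i ih =>
    have h1 : psiFrom T γ (s ++ u) ++ [i] ∈ T := by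
      have hbr := (psiFrom_spec hT hγ (s ++ u)).1
      rcases i <;> [exact hbr.2.1; exact hbr.2.2]
    calc psiFrom T γ s <+: psiFrom T γ (s ++ u) := ih
      _ <+: psiFrom T γ (s ++ u) ++ [i] := List.prefix_append _ _
      _ <+: nextBranch T (psiFrom T γ (s ++ u) ++ [i]) := (nb_spec hT h1).1
      _ = psiFrom T γ ((s ++ u) ++ [i]) := (psiFrom_concat _ _ _).symm
      _ = psiFrom T γ (s ++ (u ++ [i])) := by rw [List.append_assoc]

lemma psiFrom_mono (hT : PPTree T) {γ : List Bool} (hγ : Branching T γ) {s t : List Bool}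
    (h : s <+: t) : psiFrom T γ s <+: psiFrom T γ t := by
  obtain ⟨u, rfl⟩ := h
  exact psiFrom_le hT hγ s u

lemma psiFrom_reflect (hT : PPTree T) {γ : List Bool} (hγ : Branching T γ) {s t : List Bool}
    (h : psiFrom T γ s <+: psiFrom T γ t) : s <+: t := by
  induction s generalizing γ t with
  | nil => exact List.nil_prefix
  | cons i s ih =>
    cases t with
    | nil =>
      exfalso
      have h1 := (psiFrom_spec hT hγ (i :: s)).2.2
      have h2 := h.length_le
      rw [psiFrom_nil] at h2
      simp only [List.length_cons] at h1
      omega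
    | cons j t =>
      have hγi : γ ++ [i] ∈ T := by rcases i <;> [exact hγ.2.1; exact hγ.2.2]
      have hγj : γ ++ [j] ∈ T := by rcases j <;> [exact hγ.2.1; exact hγ.2.2]
      have hbi := (nb_spec hT hγi).2.1
      have hbj := (nb_spec hT hγj).2.1
      have hpi : γ ++ [i] <+: psiFrom T γ (i :: s) := by
        rw [psiFrom_cons]
        exact (nb_spec hT hγi).1.trans (psiFrom_spec hT hbi s).2.1
      have hpj : γ ++ [j] <+: psiFrom T γ (j :: t) := by
        rw [psiFrom_cons]
        exact (nb_spec hT hγj).1.trans (psiFrom_spec hT hbj t).2.1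
      have hij : i = j := by
        have h1 : γ ++ [i] <+: psiFrom T γ (j :: t) := (hpi.trans h)
        have heq : γ ++ [i] = γ ++ [j] := by
          rcases List.prefix_or_prefix_of_prefix h1 hpj with hc | hc
          · exact hc.eq_of_length (by simp)
          · exact (hc.eq_of_length (by simp)).symm
        simpa using heq
      subst hij
      rw [psiFrom_cons, psiFrom_cons] at h
      exact List.cons_prefix_cons.mpr ⟨rfl, ih hbi h⟩

/-! ### Form nodes -/

lemma form_length (hT : PPTree T) {φ : List Bool} (h : FormNode T φ) :
    (stem T).length + 2 ≤ φ.length := by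
  obtain ⟨σ, hodd, rfl⟩ := h
  have hbr : Branching T (stem T) := (stem_isStem hT).1
  have := (psiFrom_spec hT hbr (σ ++ [true])).2.2
  rw [← psi_eq_psiFrom] at this
  have h1 : 1 ≤ σ.length := hodd.pos
  simp only [List.length_append, List.length_cons, List.length_nil] at this
  omega

/-- no form node is a prefix of `ψ(s++[b])` provided none is a prefix of `ψ(s)` and
the new node does not itself have "form". -/
lemma step_good (hT : PPTree T) {s : List Bool} (hs : ∀ φ, FormNode T φ → ¬ φ <+: psi T s)
    {b : Bool} (hb : b = false ∨ ¬ Odd s.length) :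
    ∀ φ, FormNode T φ → ¬ φ <+: psi T (s ++ [b]) := by
  rintro φ ⟨σ, hodd, rfl⟩ hpre
  have hbr : Branching T (stem T) := (stem_isStem hT).1
  rw [psi_eq_psiFrom, psi_eq_psiFrom] at hpre
  have hst : σ ++ [true] <+: s ++ [b] := psiFrom_reflect hT hbr hpre
  rcases Nat.lt_or_ge (σ ++ [true]).length (s ++ [b]).length with hl | hl
  · -- σ ++ [true] <+: s
    have hlen : (σ ++ [true]).length ≤ s.length := by
      simp only [List.length_append, List.length_cons, List.length_nil] at hl ⊢
      omega
    have hσs : σ ++ [true] <+: s := by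
      rcases List.prefix_or_prefix_of_prefix hst (List.prefix_append s [b]) with hc | hc
      · exact hc
      · rw [hc.eq_of_length (le_antisymm hc.length_le hlen)]
    exact hs _ ⟨σ, hodd, rfl⟩ (by
      rw [psi_eq_psiFrom, psi_eq_psiFrom]
      exact psiFrom_mono hT hbr hσs)
  · have heq : σ ++ [true] = s ++ [b] := hst.eq_of_length (le_antisymm hst.length_le hl)
    have hlen : σ.length = s.length := by
      have := congrArg List.length heq
      simpa using this
    have hσ : σ = s ∧ true = b := by
      constructor
      · exact List.append_inj_left heq (by simpa using hlen)
      · have := List.append_inj_right heq (by simpa using hlen)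
        simpa using this
    rcases hb with hb | hb
    · rw [← hσ.2] at hb; simp at hb
    · exact hb (hlen ▸ hodd)

/-! ### the leftward chain from a branching node -/

noncomputable def chain (T : Set (List Bool)) (γ : List Bool) : ℕ → List Bool
  | 0 => γ
  | n + 1 => nextBranch T (chain T γ n ++ [false])

noncomputable def chainPath (T : Set (List Bool)) (γ : List Bool) : ℕ → Bool :=
  fun n => (chain T γ (n + 1)).getD n false

lemma chain_spec (hT : PPTree T) {γ : List Bool} (hγ : Branching T γ) (n : ℕ) :
    Branching T (chain T γ n) ∧ chain T γ n ++ [false] <+: chain T γ (n + 1) ∧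
      γ.length + n ≤ (chain T γ n).length := by
  induction n with
  | zero =>
    refine ⟨hγ, (nb_spec hT hγ.2.1).1, by simp [chain]⟩
  | succ n ih =>
    obtain ⟨ih1, ih2, ih3⟩ := ih
    have h1 : chain T γ (n + 1) ++ [false] ∈ T := (nb_spec hT (ih1.2.1)).2.1.2.1
    have hbr : Branching T (chain T γ (n + 1)) := (nb_spec hT ih1.2.1).2.1
    refine ⟨hbr, (nb_spec hT hbr.2.1).1, ?_⟩
    have := ih2.length_le
    simp only [List.length_append, List.length_cons, List.length_nil] at this
    omega

lemma chain_le (hT : PPTree T) {γ : List Bool} (hγ : Branching T γ) {m n : ℕ} (h : m ≤ n) :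
    chain T γ m <+: chain T γ n := by
  induction n with
  | zero => rw [Nat.le_zero.mp h]
  | succ n ih =>
    rcases Nat.lt_or_ge m (n + 1) with hl | hl
    · exact (ih (Nat.lt_succ_iff.mp hl)).trans
        ((List.prefix_append _ [false]).trans (chain_spec hT hγ n).2.1)
    · rw [le_antisymm h hl]

lemma chain_prefixOf (hT : PPTree T) {γ : List Bool} (hγ : Branching T γ) (m : ℕ) :
    PrefixOf (chain T γ m) (chainPath T γ) := by
  unfold PrefixOf
  apply List.ext_getElem (by simp)
  intro i h1 h2
  have hY : ∀ k (hk : i < (chain T γ k).length), (chain T γ k)[i]'hk = chainPath T γ i := by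
    intro k hk
    unfold chainPath
    have hik : i < (chain T γ (i + 1)).length := by
      have h3 := (chain_spec hT hγ i).2.2
      have h4 := ((chain_spec hT hγ i).2.1).length_le
      simp only [List.length_append, List.length_cons, List.length_nil] at h4
      omega
    rw [List.getD_eq_getElem _ _ hik]
    rcases le_or_gt k (i + 1) with hc | hc
    · exact (chain_le hT hγ hc).getElem hk
    · exact ((chain_le hT hγ hc.le).getElem hik).symm
  rw [List.getElem_map, List.getElem_range]
  exact hY m h1

lemma chainPath_mem (hT : PPTree T) {γ : List Bool} (hγ : Branching T γ) :
    chainPath T γ ∈ treePaths T := by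
  intro n
  have h1 : PrefixOf (chain T γ n) (chainPath T γ) := chain_prefixOf hT hγ n
  have h2 : n ≤ (chain T γ n).length := le_trans (by omega) (chain_spec hT hγ n).2.2
  have h3 : (List.range n).map (chainPath T γ) <+: chain T γ n :=
    prefixOf_prefix (prefixOf_range _ _) h1 (by simpa using h2)
  exact hT.2.1 _ _ h3 (chain_spec hT hγ n).1.1

lemma chainPath_bit (hT : PPTree T) {γ : List Bool} (hγ : Branching T γ) (m : ℕ) :
    chainPath T γ (chain T γ m).length = false := by
  have h1 : PrefixOf (chain T γ m ++ [false]) (chainPath T γ) :=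
    prefixOf_mono (chain_spec hT hγ m).2.1 (chain_prefixOf hT hγ (m + 1))
  have h2 := prefixOf_getElem h1 (i := (chain T γ m).length) (by simp)
  simpa using h2.symm

lemma chain_branching_on (hT : PPTree T) {γ β : List Bool} (hγ : Branching T γ)
    (hβ : Branching T β) (hγβ : γ <+: β) (hβY : PrefixOf β (chainPath T γ)) :
    ∃ m, β = chain T γ m := by
  classical
  have hP : ∃ m, β.length ≤ (chain T γ m).length :=
    ⟨β.length, le_trans (by omega) (chain_spec hT hγ β.length).2.2⟩
  set m := Nat.find hP with hm
  have hspec : β.length ≤ (chain T γ m).length := Nat.find_spec hP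
  cases hmc : m with
  | zero =>
    rw [hmc] at hspec
    have : β = γ := (hγβ.eq_of_length (le_antisymm hγβ.length_le hspec)).symm
    exact ⟨0, this⟩
  | succ k =>
    have hk : ¬ β.length ≤ (chain T γ k).length := Nat.find_min hP (by omega)
    push_neg at hk
    have hkY : PrefixOf (chain T γ k ++ [false]) (chainPath T γ) :=
      prefixOf_mono (chain_spec hT hγ k).2.1 (chain_prefixOf hT hγ (k + 1))
    have hkβ : chain T γ k ++ [false] <+: β :=
      prefixOf_prefix hkY hβY (by simp; omega)
    have hmem : chain T γ k ++ [false] ∈ T := hT.2.1 _ _ hkβ hβ.1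
    have hnb : chain T γ (k + 1) <+: β := nb_prefix_of_branching hT hmem hβ hkβ
    rw [hmc] at hspec
    exact ⟨k + 1, (hnb.eq_of_length (le_antisymm hnb.length_le hspec)).symm⟩

lemma chain_avoids_form (hT : PPTree T) {γ : List Bool} (hγ : Branching T γ)
    {φ : List Bool} (hφ : FormNode T φ) (hpre : PrefixOf φ (chainPath T γ)) : φ <+: γ := by
  obtain ⟨σ, hodd, rfl⟩ := hφ
  have hstem : Branching T (stem T) := (stem_isStem hT).1
  set β : List Bool := psi T σ with hβdef
  have hβbr : Branching T β := by
    rw [hβdef, psi_eq_psiFrom]; exact (psiFrom_spec hT hstem σ).1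
  have hβT : β ++ [true] ∈ T := hβbr.2.2
  have hφ_eq : psi T (σ ++ [true]) = nextBranch T (β ++ [true]) := by
    rw [psi_eq_psiFrom, psiFrom_concat, ← psi_eq_psiFrom]
  have hβt : β ++ [true] <+: psi T (σ ++ [true]) := by
    rw [hφ_eq]; exact (nb_spec hT hβT).1
  have hβtY : PrefixOf (β ++ [true]) (chainPath T γ) := prefixOf_mono hβt hpre
  have hβY : PrefixOf β (chainPath T γ) := prefixOf_mono (List.prefix_append β [true]) hβtY
  have hγY : PrefixOf γ (chainPath T γ) := chain_prefixOf hT hγ 0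
  rcases Nat.lt_or_ge β.length γ.length with hl | hl
  · -- β ++ [true] <+: γ, so φ = nb(β++[true]) <+: γ since γ is branching
    have h1 : β ++ [true] <+: γ := prefixOf_prefix hβtY hγY (by simp; omega)
    rw [hφ_eq]
    exact nb_prefix_of_branching hT (hT.2.1 _ _ h1 hγ.1) hγ h1
  · exfalso
    have hγβ : γ <+: β := prefixOf_prefix hγY hβY hl
    obtain ⟨m, hm⟩ := chain_branching_on hT hγ hβbr hγβ hβY
    have hbit : chainPath T γ β.length = false := by rw [hm]; exact chainPath_bit hT hγ m
    have := prefixOf_getElem hβtY (i := β.length) (by simp)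
    simp only [List.getElem_concat_length] at this
    rw [hbit] at this
    exact Bool.noConfusion this

/-- the key membership criterion for `Nar`. -/
lemma mem_nar (hT : PPTree T) {γ τ : List Bool} (hγ : Branching T γ)
    (hgood : ∀ φ, FormNode T φ → ¬ φ <+: γ) (hτγ : τ <+: γ) : τ ∈ Nar T := by
  refine ⟨hT.2.1 _ _ hτγ hγ.1, chainPath T γ, chainPath_mem hT hγ, ?_, ?_⟩
  · exact prefixOf_mono hτγ (chain_prefixOf hT hγ 0)
  · rintro ρ hρ hpre
    exact hgood ρ hρ.1 (chain_avoids_form hT hγ hρ.1 hpre)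

lemma avoids_form {X : ℕ → Bool} (hSig : ∀ ρ ∈ sigmaSet T, ¬ PrefixOf ρ X)
    {φ : List Bool} (hφ : FormNode T φ) (hpre : PrefixOf φ X) : False := by
  classical
  have hP : ∃ n, ∃ ψ : List Bool, (FormNode T ψ ∧ PrefixOf ψ X) ∧ ψ.length = n :=
    ⟨φ.length, φ, ⟨hφ, hpre⟩, rfl⟩
  obtain ⟨ψ₀, ⟨hf₀, hp₀⟩, hl₀⟩ := Nat.find_spec hP
  refine hSig ψ₀ ⟨hf₀, ?_⟩ hp₀
  intro ρ hρp hρne hρf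
  have hρX : PrefixOf ρ X := prefixOf_mono hρp hp₀
  have hρl : ρ.length < ψ₀.length := by
    rcases Nat.lt_or_ge ρ.length ψ₀.length with h | h
    · exact h
    · exact absurd (hρp.eq_of_length (le_antisymm hρp.length_le h)) hρne
  exact Nat.find_min hP (m := ρ.length) (by omega) ⟨ρ, ⟨hρf, hρX⟩, rfl⟩

/-! ### the branching sequence along a path -/

noncomputable def pb (T : Set (List Bool)) (X : ℕ → Bool) : ℕ → List Bool
  | 0 => stem T
  | n + 1 => nextBranch T (pb T X n ++ [X (pb T X n).length])

lemma pb_prefixOf (hT : PPTree T) {X : ℕ → Bool} (hX : X ∈ treePaths T) (n : ℕ) :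
    PrefixOf (pb T X n) X := by
  induction n with
  | zero => exact stem_prefixOf_path hT hX
  | succ n ih =>
    have h1 : PrefixOf (pb T X n ++ [X (pb T X n).length]) X := prefixOf_snoc ih
    exact nb_prefixOf_path hT hX h1

lemma pb_branching (hT : PPTree T) {X : ℕ → Bool} (hX : X ∈ treePaths T) (n : ℕ) :
    Branching T (pb T X n) := by
  induction n with
  | zero => exact (stem_isStem hT).1
  | succ n ih =>
    have hmem : pb T X n ++ [X (pb T X n).length] ∈ T := by
      rcases hb : X (pb T X n).length <;> [exact ih.2.1; exact ih.2.2]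
    exact (nb_spec hT hmem).2.1

lemma pb_length (hT : PPTree T) {X : ℕ → Bool} (hX : X ∈ treePaths T) (n : ℕ) :
    n ≤ (pb T X n).length := by
  induction n with
  | zero => omega
  | succ n ih =>
    have hmem : pb T X n ++ [X (pb T X n).length] ∈ T := by
      have ihb := pb_branching hT hX n
      rcases hb : X (pb T X n).length <;> [exact ihb.2.1; exact ihb.2.2]
    have := (nb_spec hT hmem).1.length_le
    simp only [List.length_append, List.length_cons, List.length_nil] at this
    show n + 1 ≤ (nextBranch T _).length
    omega

lemma pb_psi (hT : PPTree T) {X : ℕ → Bool} (hX : X ∈ treePaths T) (n : ℕ) :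
    pb T X n = psi T ((List.range n).map (fun k => X (pb T X k).length)) := by
  induction n with
  | zero => rfl
  | succ n ih =>
    rw [List.range_succ, List.map_append, List.map_singleton, psi_eq_psiFrom, psiFrom_concat,
      ← psi_eq_psiFrom, ← ih]
    rfl

lemma nar_tree (htree : IsTree T) : IsTree (Nar T) := by
  rintro s t hst ⟨htT, X, hX, hpre, hav⟩
  exact ⟨htree s t hst htT, X, hX, prefixOf_mono hst hpre, hav⟩

lemma nar_pruned : Pruned (Nar T) := by
  rintro τ ⟨hτT, X, hX, hpre, hav⟩
  refine ⟨(List.range (τ.length + 1)).map X, ⟨hX _, X, hX, prefixOf_range X _, hav⟩, ?_, ?_⟩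
  · exact prefixOf_prefix hpre (prefixOf_range X _) (by simp)
  · intro he
    have := congrArg List.length he
    simp at this

lemma stem_good (hT : PPTree T) : ∀ φ, FormNode T φ → ¬ φ <+: stem T := by
  intro φ hφ hp
  have h1 := form_length hT hφ
  have h2 := hp.length_le
  omega

lemma stem_nar (hT : PPTree T) : stem T ∈ Nar T :=
  mem_nar hT (stem_isStem hT).1 (stem_good hT) List.prefix_rfl

lemma child_nar (hT : PPTree T) (b : Bool) : stem T ++ [b] ∈ Nar T := by
  have hstem : Branching T (stem T) := (stem_isStem hT).1
  have hmem : stem T ++ [b] ∈ T := by rcases b <;> [exact hstem.2.1; exact hstem.2.2]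
  have hγ : Branching T (psi T [b]) := by
    rw [psi_eq_psiFrom]; exact (psiFrom_spec hT hstem [b]).1
  have hgood0 : ∀ φ, FormNode T φ → ¬ φ <+: psi T [] := stem_good hT
  have hgood := step_good hT (s := []) hgood0 (Or.inr (by simp)) (b := b)
  have hsp : stem T ++ [b] <+: psi T [b] := by
    have he : psi T [b] = nextBranch T (stem T ++ [b]) := rfl
    rw [he]; exact (nb_spec hT hmem).1
  exact mem_nar hT hγ (by simpa using hgood) hsp

lemma isStem_unique {S : Set (List Bool)} {s₁ s₂ : List Bool} (htreeS : IsTree S)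
    (h1 : IsStem S s₁) (h2 : IsStem S s₂) : s₁ = s₂ := by
  have hlen : s₁.length = s₂.length := le_antisymm (h1.2 _ h2.1) (h2.2 _ h1.1)
  by_cases hc : s₁ <+: s₂
  · exact hc.eq_of_length hlen
  by_cases hc' : s₂ <+: s₁
  · exact (hc'.eq_of_length hlen.symm).symm
  · obtain ⟨μ, -, hμbr, hμl, -⟩ :=
      branch_meet htreeS h1.1.1 h2.1.1 ⟨hc, hc'⟩ List.nil_prefix List.nil_prefix
    exact absurd (h1.2 μ hμbr) (by omega)

lemma stem_eq_of_isStem {S : Set (List Bool)} {s : List Bool} (htreeS : IsTree S)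
    (h : IsStem S s) : stem S = s := by
  have hex : ∃ t, IsStem S t := ⟨s, h⟩
  unfold stem
  rw [dif_pos hex]
  exact isStem_unique htreeS hex.choose_spec h

lemma ne_snoc_not (β : List Bool) (b : Bool) : ¬ (β ++ [b] <+: β ++ [!b]) := by
  intro hp
  have h := hp.eq_of_length (by simp)
  have hb : b = !b := by simpa using h
  cases b <;> simp at hb

lemma nar_perfect (hT : PPTree T) : PerfectTree (Nar T) := by
  rintro τ ⟨hτT, X, hX, hpre, hav⟩
  set n := 2 * τ.length with hn
  set β := pb T X n with hβ
  have hβbr : Branching T β := pb_branching hT hX n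
  have hβX : PrefixOf β X := pb_prefixOf hT hX n
  have hβlen : n ≤ β.length := pb_length hT hX n
  have hτβ : τ <+: β := prefixOf_prefix hpre hβX (by omega)
  set b₁ := X β.length with hb₁
  have ht₁X : PrefixOf (β ++ [b₁]) X := prefixOf_snoc hβX
  have ht₁Nar : β ++ [b₁] ∈ Nar T := ⟨prefixOf_mem hT.2.1 hX ht₁X, X, hX, ht₁X, hav⟩
  set s := (List.range n).map (fun k => X (pb T X k).length) with hs
  have hβψ : β = psi T s := pb_psi hT hX n
  have hgoodβ : ∀ φ, FormNode T φ → ¬ φ <+: psi T s := by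
    intro φ hφ hp
    have hφβ : φ <+: β := by rw [hβψ]; exact hp
    exact avoids_form hav hφ (prefixOf_mono hφβ hβX)
  have hsl : ¬ Odd s.length := by
    rw [hs]; simp [hn, Nat.odd_iff]
  have hgoodγ := step_good hT hgoodβ (Or.inr hsl) (b := !b₁)
  have hγbr : Branching T (psi T (s ++ [!b₁])) := by
    rw [psi_eq_psiFrom]; exact (psiFrom_spec hT (stem_isStem hT).1 _).1
  have hmem₂ : β ++ [!b₁] ∈ T := by rcases (!b₁) <;> [exact hβbr.2.1; exact hβbr.2.2]
  have ht₂γ : β ++ [!b₁] <+: psi T (s ++ [!b₁]) := by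
    rw [psi_eq_psiFrom, psiFrom_concat, ← psi_eq_psiFrom, ← hβψ]
    exact (nb_spec hT hmem₂).1
  have ht₂Nar : β ++ [!b₁] ∈ Nar T := mem_nar hT hγbr hgoodγ ht₂γ
  refine ⟨β ++ [b₁], ht₁Nar, β ++ [!b₁], ht₂Nar, hτβ.trans (List.prefix_append _ _),
    hτβ.trans (List.prefix_append _ _), ne_snoc_not β b₁, by simpa using ne_snoc_not β (!b₁)⟩

end Stmt10Aux

open Stmt10Aux in
/-- For a perfect pruned tree `T`, the narrow subtree `Nar(T)` is a perfect pruned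
subtree of `T`, `stem(Nar(T)) = stem(T)`, and no `σ_k(T)` belongs to `Nar(T)`. -/
theorem stmt10 (T : Set (List Bool)) (hT : PPTree T) :
    PPTree (Nar T) ∧ Nar T ⊆ T ∧ stem (Nar T) = stem T ∧
      ∀ τ ∈ sigmaSet T, τ ∉ Nar T := by
  have hnart : IsTree (Nar T) := nar_tree hT.2.1
  have hbrnar : Branching (Nar T) (stem T) :=
    ⟨stem_nar hT, child_nar hT false, child_nar hT true⟩
  have hisstem : IsStem (Nar T) (stem T) :=
    ⟨hbrnar, fun t ht => (stem_isStem hT).2 t ⟨ht.1.1, ht.2.1.1, ht.2.2.1⟩⟩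
  refine ⟨⟨⟨stem T, stem_nar hT⟩, hnart, nar_pruned, nar_perfect hT⟩, fun τ hτ => hτ.1,
    stem_eq_of_isStem hnart hisstem, ?_⟩
  rintro τ hτ ⟨-, X, hX, hpre, hav⟩
  exact hav τ hτ hpre
end

section
/- Let T be a perfect pruned tree, let X ∈ [Nar(T)], and let m ∈ ℕ. Then there exists k ∈ ℕ such that the initial segment X ↾ m of X is an initial segment of σ_k(T), and σ_k(T) is not an initial segment of X. (In words: the nodes σ_k(T) are dense along every path of Nar(T).) -/
open scoped Classical

namespace Stmt11Aux

/-- `X ↾ n`. -/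
def seg (X : ℕ → Bool) (n : ℕ) : List Bool := (List.range n).map X

lemma seg_length (X : ℕ → Bool) (n : ℕ) : (seg X n).length = n := by simp [seg]

lemma seg_succ (X : ℕ → Bool) (n : ℕ) : seg X (n + 1) = seg X n ++ [X n] := by
  simp [seg, List.range_succ]

lemma seg_take (X : ℕ → Bool) {n m : ℕ} (h : n ≤ m) : (seg X m).take n = seg X n := by
  rw [seg, seg, ← List.map_take, List.take_range]
  have hmin : n ⊓ m = n := by omega
  rw [hmin]

lemma seg_prefix {n m : ℕ} (h : n ≤ m) (X : ℕ → Bool) : seg X n <+: seg X m := by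
  rw [← seg_take X h]; exact List.take_prefix _ _

lemma prefix_seg {u : List Bool} {X : ℕ → Bool} {n : ℕ} (h : u <+: seg X n) :
    u = seg X u.length := by
  have hl : u.length ≤ n := by simpa [seg_length] using h.length_le
  have h2 : u <+: seg X u.length := by
    rw [← seg_take X hl]
    exact (List.prefix_take_iff).mpr ⟨h, le_rfl⟩
  exact h2.eq_of_length (by simp [seg_length])

lemma prefixOf_iff {σ : List Bool} {X : ℕ → Bool} : PrefixOf σ X ↔ σ = seg X σ.length :=
  Iff.rfl

lemma mem_of_path {T : Set (List Bool)} {X : ℕ → Bool} (hX : X ∈ treePaths T)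
    {σ : List Bool} (h : PrefixOf σ X) : σ ∈ T := by
  rw [prefixOf_iff] at h; rw [h]; exact hX σ.length

lemma exists_minLength (P : List Bool → Prop) (h : ∃ s, P s) :
    ∃ s, P s ∧ ∀ t, P t → s.length ≤ t.length := by
  classical
  obtain ⟨s, hs⟩ := h
  have hn : ∃ n, ∃ t, P t ∧ t.length = n := ⟨s.length, s, hs, rfl⟩
  obtain ⟨t, ht, htl⟩ := Nat.find_spec hn
  refine ⟨t, ht, fun u hu => ?_⟩
  rw [htl]
  exact Nat.find_le ⟨u, hu, rfl⟩

/-- Divergence point of two incomparable strings. -/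
lemma exists_div : ∀ s t : List Bool, ¬ s <+: t → ¬ t <+: s →
    ∃ q b, q ++ [b] <+: s ∧ q ++ [!b] <+: t := by
  intro s
  induction s with
  | nil => intro t h _; exact absurd (List.nil_prefix) h
  | cons a s ih =>
    intro t hst hts
    cases t with
    | nil => exact absurd (List.nil_prefix) hts
    | cons c t =>
      by_cases hac : a = c
      · subst hac
        have h1 : ¬ s <+: t := fun h => hst (List.cons_prefix_cons.mpr ⟨rfl, h⟩)
        have h2 : ¬ t <+: s := fun h => hts (List.cons_prefix_cons.mpr ⟨rfl, h⟩)
        obtain ⟨q, b, hb1, hb2⟩ := ih t h1 h2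
        exact ⟨a :: q, b, List.cons_prefix_cons.mpr ⟨rfl, hb1⟩,
          List.cons_prefix_cons.mpr ⟨rfl, hb2⟩⟩
      · have hbc : (!a) = c := by
          cases a <;> cases c <;> first | rfl | exact absurd rfl hac
        exact ⟨[], a, ⟨s, rfl⟩, ⟨t, by rw [← hbc]; rfl⟩⟩

/-- Divergence of a string from a path. -/
lemma div_seg {s : List Bool} {X : ℕ → Bool} (h : s ≠ seg X s.length) :
    ∃ d, d < s.length ∧ seg X d ++ [!X d] <+: s := by
  have hlen : (seg X s.length).length = s.length := seg_length X _
  have h1 : ¬ s <+: seg X s.length := fun hp => h (hp.eq_of_length (by rw [hlen]))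
  have h2 : ¬ seg X s.length <+: s := fun hp => h (hp.eq_of_length hlen).symm
  obtain ⟨q, b, hb1, hb2⟩ := exists_div s _ h1 h2
  have hq : q ++ [!b] = seg X (q.length + 1) := by
    have := prefix_seg hb2
    simpa using this
  rw [seg_succ] at hq
  have hq1 : q = seg X q.length :=
    List.append_inj' hq rfl |>.1
  have hb : b = !X q.length := by
    have h3 := List.append_inj' hq rfl |>.2
    injection h3 with h4 _
    rw [← h4]
    simp
  refine ⟨q.length, ?_, ?_⟩
  · have := hb1.length_le; simp at this; omega
  · rw [← hb, ← hq1]; exact hb1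

lemma branching_div {T : Set (List Bool)} {X : ℕ → Bool} (hTree : IsTree T)
    (hX : X ∈ treePaths T) {s : List Bool} {d : ℕ} (hs : s ∈ T)
    (hd : seg X d ++ [!X d] <+: s) : Branching T (seg X d) := by
  have h1 : seg X d ++ [!X d] ∈ T := hTree _ _ hd hs
  have h2 : seg X d ++ [X d] ∈ T := by rw [← seg_succ]; exact hX (d + 1)
  have h0 : seg X d ∈ T := hTree _ _ (List.prefix_append _ _) h1
  refine ⟨h0, ?_, ?_⟩ <;> cases hc : X d <;> simp [hc] at h1 h2 <;> assumption

lemma exists_branch_ext {T : Set (List Bool)} (hT : PPTree T) {ρ : List Bool} (hρ : ρ ∈ T) :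
    ∃ s, ρ <+: s ∧ Branching T s := by
  obtain ⟨hne, hTree, hPr, hPerf⟩ := hT
  obtain ⟨t₁, ht₁, t₂, ht₂, h₁, h₂, hinc⟩ := hPerf ρ hρ
  obtain ⟨q, b, hb1, hb2⟩ := exists_div t₁ t₂ hinc.1 hinc.2
  have hqb : Branching T q := by
    have e1 : q ++ [b] ∈ T := hTree _ _ hb1 ht₁
    have e2 : q ++ [!b] ∈ T := hTree _ _ hb2 ht₂
    have e0 : q ∈ T := hTree _ _ (List.prefix_append _ _) e1
    refine ⟨e0, ?_, ?_⟩ <;> cases hc : b <;> simp [hc] at e1 e2 <;> assumption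
  have hρ1 : ρ <+: q ++ [b] := by
    rcases List.prefix_or_prefix_of_prefix h₁ hb1 with h | h
    · exact h
    · exfalso
      have h' : q ++ [b] <+: t₂ := h.trans h₂
      have := (List.prefix_of_prefix_length_le h' hb2 (by simp)).eq_of_length (by simp)
      simp at this
  have hρ2 : ρ <+: q ++ [!b] := by
    rcases List.prefix_or_prefix_of_prefix h₂ hb2 with h | h
    · exact h
    · exfalso
      have h' : q ++ [!b] <+: t₁ := h.trans h₁
      have := (List.prefix_of_prefix_length_le h' hb1 (by simp)).eq_of_length (by simp)
      simp at this
  rcases Nat.lt_or_ge ρ.length (q ++ [b]).length with h | h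
  · refine ⟨q, ?_, hqb⟩
    refine List.prefix_of_prefix_length_le hρ1 (List.prefix_append _ _) ?_
    simp at h ⊢; omega
  · exfalso
    have e1 : ρ = q ++ [b] := hρ1.eq_of_length (le_antisymm hρ1.length_le h)
    have e2 : ρ = q ++ [!b] := hρ2.eq_of_length (le_antisymm hρ2.length_le (by simpa using h))
    have : q ++ [b] = q ++ [!b] := e1 ▸ e2
    simp at this

lemma nextBranch_pref (T : Set (List Bool)) (ρ : List Bool) : ρ <+: nextBranch T ρ := by
  rw [nextBranch]
  split
  next h => exact h.choose_spec.1
  next _ => exact List.prefix_refl _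

lemma nextBranch_spec {T : Set (List Bool)} (hT : PPTree T) {ρ : List Bool} (hρ : ρ ∈ T) :
    ρ <+: nextBranch T ρ ∧ Branching T (nextBranch T ρ) ∧
      ∀ t, ρ <+: t → Branching T t → (nextBranch T ρ).length ≤ t.length := by
  have hex : ∃ s : List Bool, ρ <+: s ∧ Branching T s ∧
      ∀ t : List Bool, ρ <+: t → Branching T t → s.length ≤ t.length := by
    obtain ⟨s, hs⟩ := exists_branch_ext hT hρ
    obtain ⟨u, hu, hmin⟩ := exists_minLength (fun s => ρ <+: s ∧ Branching T s) ⟨s, hs⟩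
    exact ⟨u, hu.1, hu.2, fun t h1 h2 => hmin t ⟨h1, h2⟩⟩
  rw [nextBranch, dif_pos hex]
  exact hex.choose_spec

lemma stem_spec {T : Set (List Bool)} (hT : PPTree T) : IsStem T (stem T) := by
  have hnil : ([] : List Bool) ∈ T := by
    obtain ⟨s, hs⟩ := hT.1
    exact hT.2.1 [] s (List.nil_prefix) hs
  have hex : ∃ s, IsStem T s := by
    obtain ⟨s, _, hs⟩ := exists_branch_ext hT hnil
    obtain ⟨u, hu, hmin⟩ := exists_minLength (Branching T) ⟨s, hs⟩
    exact ⟨u, hu, hmin⟩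
  rw [stem, dif_pos hex]
  exact hex.choose_spec

lemma stem_prefixOf {T : Set (List Bool)} {X : ℕ → Bool} (hT : PPTree T)
    (hX : X ∈ treePaths T) : PrefixOf (stem T) X := by
  obtain ⟨hbr, hmin⟩ := stem_spec hT
  rw [prefixOf_iff]
  by_contra h
  obtain ⟨d, hd, hdiv⟩ := div_seg h
  have hb := branching_div hT.2.1 hX hbr.1 hdiv
  have := hmin _ hb
  rw [seg_length] at this
  omega

lemma nextBranch_prefixOf {T : Set (List Bool)} {X : ℕ → Bool} (hT : PPTree T)
    (hX : X ∈ treePaths T) {ρ : List Bool} (hρ : PrefixOf ρ X) :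
    PrefixOf (nextBranch T ρ) X := by
  have hρT : ρ ∈ T := mem_of_path hX hρ
  obtain ⟨hpre, hbr, hmin⟩ := nextBranch_spec hT hρT
  rw [prefixOf_iff]
  by_contra h
  obtain ⟨d, hd, hdiv⟩ := div_seg h
  have hbrd : Branching T (seg X d) := branching_div hT.2.1 hX hbr.1 hdiv
  have hρd : ρ.length ≤ d := by
    by_contra hlt
    push_neg at hlt
    have h1 : seg X d ++ [!X d] <+: ρ :=
      List.prefix_of_prefix_length_le hdiv hpre (by simp [seg_length]; omega)
    have h2 : seg X d ++ [X d] <+: ρ := by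
      rw [← seg_succ]
      rw [prefixOf_iff] at hρ
      have := seg_prefix (show d + 1 ≤ ρ.length by omega) X
      rwa [← hρ] at this
    have := (List.prefix_of_prefix_length_le h1 h2 (by simp)).eq_of_length (by simp)
    simp at this
  have hρpre : ρ <+: seg X d := by
    rw [prefixOf_iff] at hρ
    have := seg_prefix hρd X
    rwa [← hρ] at this
  have := hmin _ hρpre hbrd
  rw [seg_length] at this
  omega

lemma psi_append (T : Set (List Bool)) (σ : List Bool) (i : Bool) :
    psi T (σ ++ [i]) = nextBranch T (psi T σ ++ [i]) := by
  simp [psi, List.foldl_append]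

lemma psi_path {T : Set (List Bool)} {X : ℕ → Bool} (hT : PPTree T)
    (hX : X ∈ treePaths T) :
    ∀ j, ∃ σ : List Bool, σ.length = j ∧ PrefixOf (psi T σ) X ∧ j ≤ (psi T σ).length := by
  intro j
  induction j with
  | zero => exact ⟨[], rfl, stem_prefixOf hT hX, Nat.zero_le _⟩
  | succ j ih =>
    obtain ⟨σ, hlen, hpre, hj⟩ := ih
    set b := psi T σ with hbdef
    have hbi : PrefixOf (b ++ [X b.length]) X := by
      rw [prefixOf_iff] at hpre ⊢
      have : b ++ [X b.length] = seg X (b.length + 1) := by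
        rw [seg_succ, ← hpre]
      rw [this]
      congr 1
      simp [this, seg_length]
    have hnew : PrefixOf (psi T (σ ++ [X b.length])) X := by
      rw [psi_append, ← hbdef]
      exact nextBranch_prefixOf hT hX hbi
    refine ⟨σ ++ [X b.length], by simp [hlen], hnew, ?_⟩
    rw [psi_append, ← hbdef]
    have h1 := (nextBranch_spec hT (mem_of_path hX hbi)).1.length_le
    simp at h1
    omega

lemma avoid {T : Set (List Bool)} {X : ℕ → Bool} (hX : X ∈ treePaths (Nar T)) :
    ∀ ρ ∈ sigmaSet T, ¬ PrefixOf ρ X := by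
  intro ρ hρ hpre
  have hmem : seg X ρ.length ∈ Nar T := hX ρ.length
  obtain ⟨_, Y, hY, hpreY, hav⟩ := hmem
  rw [prefixOf_iff] at hpre
  rw [← hpre] at hpreY
  exact hav ρ hρ hpreY

lemma exists_min_form {T : Set (List Bool)} (n : ℕ) :
    ∀ τ : List Bool, τ.length ≤ n → FormNode T τ → ∃ ρ ∈ sigmaSet T, ρ <+: τ := by
  induction n with
  | zero =>
    intro τ hτ hf
    refine ⟨τ, ⟨hf, fun ρ hρτ hne _ => ?_⟩, List.prefix_refl _⟩
    have h1 := hρτ.length_le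
    have h2 : ρ.length ≠ τ.length := fun h => hne (hρτ.eq_of_length h)
    omega
  | succ n ih =>
    intro τ hτ hf
    by_cases hmin : ∀ ρ, ρ <+: τ → ρ ≠ τ → ¬ FormNode T ρ
    · exact ⟨τ, ⟨hf, hmin⟩, List.prefix_refl _⟩
    · push_neg at hmin
      obtain ⟨ρ, hρτ, hne, hρf⟩ := hmin
      have hlt : ρ.length < τ.length :=
        lt_of_le_of_ne hρτ.length_le (fun h => hne (hρτ.eq_of_length h))
      obtain ⟨ρ', h1, h2⟩ := ih ρ (by omega) hρf
      exact ⟨ρ', h1, h2.trans hρτ⟩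

end Stmt11Aux

open Stmt11Aux

/-- The nodes `σ_k(T)` are dense along every path of `Nar(T)`: if `X ∈ [Nar(T)]` and
`m ∈ ℕ`, then some `σ_k(T)` extends `X ↾ m`, while `σ_k(T)` is not an initial
segment of `X`. -/
theorem stmt11 (T : Set (List Bool)) (hT : PPTree T)
    (X : ℕ → Bool) (hX : X ∈ treePaths (Nar T)) (m : ℕ) :
    ∃ ρ ∈ sigmaSet T, (List.range m).map X <+: ρ ∧ ¬ PrefixOf ρ X := by
  classical
  have hXT : X ∈ treePaths T := fun n => (hX n).1
  obtain ⟨σ, hσlen, hσpre, hσl2⟩ := psi_path hT hXT (2 * m + 1)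
  set b := psi T σ with hbdef
  have hform : FormNode T (psi T (σ ++ [true])) :=
    ⟨σ, by rw [hσlen]; exact ⟨m, by ring⟩, rfl⟩
  obtain ⟨ρ, hρs, hρpre⟩ := exists_min_form (psi T (σ ++ [true])).length _ le_rfl hform
  have hnρ : ¬ PrefixOf ρ X := avoid hX ρ hρs
  refine ⟨ρ, hρs, ?_, hnρ⟩
  have hbpre : b <+: psi T (σ ++ [true]) := by
    rw [psi_append]
    exact (List.prefix_append b [true]).trans (nextBranch_pref T _)
  rcases Nat.lt_or_ge b.length ρ.length with h | h
  · have hbρ : b <+: ρ := List.prefix_of_prefix_length_le hbpre hρpre (by omega)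
    have hmb : seg X m <+: b := by
      rw [prefixOf_iff] at hσpre
      have := seg_prefix (show m ≤ b.length by omega) X
      rwa [← hσpre] at this
    exact hmb.trans hbρ
  · exfalso
    apply hnρ
    have hρb : ρ <+: b := List.prefix_of_prefix_length_le hρpre hbpre h
    rw [prefixOf_iff] at hσpre ⊢
    rw [hσpre] at hρb
    exact prefix_seg hρb
end

section
/- Let T be a perfect pruned tree. Then [T] is the disjoint union of [Nar(T)] and the sets [T⟦k⟧] for k ∈ ℕ: that is, [T] = [Nar(T)] ∪ ⋃_{k ∈ ℕ} [T⟦k⟧], [Nar(T)] ∩ [T⟦k⟧] = ∅ for every k, and [T⟦k⟧] ∩ [T⟦l⟧] = ∅ whenever k ≠ l. -/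
open scoped Classical

lemma pref_mono (X : ℕ → Bool) {m n : ℕ} (h : m ≤ n) :
    (List.range m).map X <+: (List.range n).map X := by
  have : (List.range m).map X = ((List.range n).map X).take m := by
    rw [← List.map_take, List.take_range, Nat.min_eq_left h]
  rw [this]; exact List.take_prefix _ _

lemma pref_comp {X : ℕ → Bool} {ρ : List Bool} (h : PrefixOf ρ X) (n : ℕ) :
    ρ <+: (List.range n).map X ∨ (List.range n).map X <+: ρ := by
  rw [show ρ = (List.range ρ.length).map X from h]
  rcases le_total ρ.length n with hle | hle
  · exact Or.inl (pref_mono X hle)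
  · exact Or.inr (pref_mono X hle)

lemma path_pref {T : Set (List Bool)} {X : ℕ → Bool} {ρ : List Bool}
    (h : X ∈ treePaths (fullSub T ρ)) : PrefixOf ρ X := by
  have h1 := h ρ.length
  have hlen : ((List.range ρ.length).map X).length = ρ.length := by simp
  rcases h1.2 with hc | hc
  · exact List.IsPrefix.eq_of_length hc hlen.symm
  · exact (List.IsPrefix.eq_of_length hc hlen).symm

lemma pref_of_pref_path {X : ℕ → Bool} {ρ : List Bool} (h : PrefixOf ρ X) :
    ρ = (List.range ρ.length).map X := h

/-- For a perfect pruned tree `T`, `[T]` is the disjoint union of `[Nar(T)]` and the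
sets `[T⟦k⟧]` for `k ∈ ℕ` (here indexed by the nodes `ρ = σ_k(T)` themselves). -/
theorem stmt12 (T : Set (List Bool)) (hT : PPTree T) :
    treePaths T = treePaths (Nar T) ∪ ⋃ ρ ∈ sigmaSet T, treePaths (fullSub T ρ) ∧
      (∀ ρ ∈ sigmaSet T, treePaths (Nar T) ∩ treePaths (fullSub T ρ) = ∅) ∧
      (∀ ρ ∈ sigmaSet T, ∀ ρ' ∈ sigmaSet T, ρ ≠ ρ' →
        treePaths (fullSub T ρ) ∩ treePaths (fullSub T ρ') = ∅) := by
  refine ⟨?_, ?_, ?_⟩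
  · ext X
    constructor
    · intro hX
      by_cases hc : ∃ ρ ∈ sigmaSet T, PrefixOf ρ X
      · obtain ⟨ρ, hρ, hpre⟩ := hc
        refine Or.inr (Set.mem_biUnion hρ ?_)
        intro n
        exact ⟨hX n, (pref_comp hpre n).imp id id⟩
      · push_neg at hc
        refine Or.inl fun n => ⟨hX n, X, hX, ?_, hc⟩
        show (List.range n).map X = (List.range ((List.range n).map X).length).map X
        simp
    · intro hX
      rcases hX with hX | hX
      · intro n
        exact (hX n).1
      · obtain ⟨ρ, hρ, hX⟩ := Set.mem_iUnion₂.1 hX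
        intro n
        exact (hX n).1
  · intro ρ hρ
    ext X
    simp only [Set.mem_inter_iff, Set.mem_empty_iff_false, iff_false]
    rintro ⟨hN, hF⟩
    have hpre : PrefixOf ρ X := path_pref hF
    have hmem : ρ ∈ Nar T := by
      have := hN ρ.length
      rwa [← pref_of_pref_path hpre] at this
    obtain ⟨-, Y, -, hpY, hno⟩ := hmem
    exact hno ρ hρ hpY
  · intro ρ hρ ρ' hρ' hne
    ext X
    simp only [Set.mem_inter_iff, Set.mem_empty_iff_false, iff_false]
    rintro ⟨h1, h2⟩
    have p1 : PrefixOf ρ X := path_pref h1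
    have p2 : PrefixOf ρ' X := path_pref h2
    have hcomp := pref_comp p1 ρ'.length
    rw [← pref_of_pref_path p2] at hcomp
    rcases hcomp with hc | hc
    · exact hρ'.2 ρ hc hne hρ.1
    · exact hρ.2 ρ' hc (fun e => hne e.symm) hρ'.1
end

section
/- Let T be a perfect pruned tree and k ∈ ℕ. Then T⟦k⟧ is a perfect pruned tree with stem(T⟦k⟧) = σ_k(T). Moreover, for every perfect pruned subtree S of T⟦k⟧, stem(S) extends σ_k(T); consequently stem(S) does not belong to Nar(T), and stem(S) is not an initial segment of any element of Nar(T). -/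
open scoped Classical

/-!
In a perfect pruned tree every node has a branching extension, so `ψ_T` takes branching values
and each `σ_k(T)` is a branching node. A proper initial segment of `σ_k(T)` has only one child
in `T⟦k⟧`, so every branching node of `T⟦k⟧`, and hence of any subtree, extends `σ_k(T)`. A path
of `T` through an extension of `σ_k(T)` passes through `σ_k(T)`, so no such extension is narrow.
-/

theorem PrefixOf.of_isPrefix {ρ τ : List Bool} {X : ℕ → Bool} (h : ρ <+: τ)
    (hτ : PrefixOf τ X) : PrefixOf ρ X := by
  unfold PrefixOf at *
  conv_lhs => rw [List.prefix_iff_eq_take.1 h, hτ]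
  rw [← List.map_take, List.take_range, min_eq_left h.length_le]

theorem exists_fork_of_incomparable {w s t : List Bool} (hws : w <+: s) (hwt : w <+: t)
    (hst : Incomparable s t) : ∃ u a, w <+: u ∧ u ++ [a] <+: s ∧ u ++ [!a] <+: t := by
  induction s generalizing w t with
  | nil => exact absurd List.nil_prefix hst.1
  | cons x s ih =>
    cases t with
    | nil => exact absurd List.nil_prefix hst.2
    | cons y t =>
      by_cases hxy : x = y
      · subst hxy
        have hst' : Incomparable s t :=
          ⟨fun h => hst.1 (List.cons_prefix_cons.2 ⟨rfl, h⟩),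
            fun h => hst.2 (List.cons_prefix_cons.2 ⟨rfl, h⟩)⟩
        cases w with
        | nil =>
          obtain ⟨u, a, -, hus, hut⟩ := ih List.nil_prefix List.nil_prefix hst'
          exact ⟨x :: u, a, List.nil_prefix, List.cons_prefix_cons.2 ⟨rfl, hus⟩,
            List.cons_prefix_cons.2 ⟨rfl, hut⟩⟩
        | cons c w =>
          obtain ⟨rfl, hws'⟩ := List.cons_prefix_cons.1 hws
          obtain ⟨u, a, hwu, hus, hut⟩ := ih hws' (List.cons_prefix_cons.1 hwt).2 hst'
          exact ⟨c :: u, a, List.cons_prefix_cons.2 ⟨rfl, hwu⟩,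
            List.cons_prefix_cons.2 ⟨rfl, hus⟩, List.cons_prefix_cons.2 ⟨rfl, hut⟩⟩
      · have hw : w = [] := by
          cases w with
          | nil => rfl
          | cons c w =>
            exact absurd ((List.cons_prefix_cons.1 hws).1.symm.trans
              (List.cons_prefix_cons.1 hwt).1) hxy
        refine ⟨[], x, hw ▸ List.nil_prefix, by simp, ?_⟩
        simp [Bool.eq_not_iff.2 (Ne.symm hxy)]

theorem IsTree.branching_of_append_mem {T : Set (List Bool)} (hT : IsTree T) {u : List Bool}
    {a : Bool} (ha : u ++ [a] ∈ T) (hna : u ++ [!a] ∈ T) : Branching T u := by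
  refine ⟨hT _ _ (List.prefix_append _ _) ha, ?_, ?_⟩ <;> cases a <;> assumption

theorem Branching.append_mem {T : Set (List Bool)} {u : List Bool} (hu : Branching T u)
    (a : Bool) : u ++ [a] ∈ T := by
  cases a
  exacts [hu.2.1, hu.2.2]

theorem PerfectTree.exists_branching_extension {T : Set (List Bool)} (hP : PerfectTree T)
    (hT : IsTree T) {s : List Bool} (hs : s ∈ T) : ∃ u, s <+: u ∧ Branching T u := by
  obtain ⟨t₁, ht₁, t₂, ht₂, hst₁, hst₂, hinc⟩ := hP s hs
  obtain ⟨u, a, hsu, hut₁, hut₂⟩ := exists_fork_of_incomparable hst₁ hst₂ hinc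
  exact ⟨u, hsu, hT.branching_of_append_mem (hT _ _ hut₁ ht₁) (hT _ _ hut₂ ht₂)⟩

theorem PerfectTree.exists_shortest_branching_extension {T : Set (List Bool)}
    (hP : PerfectTree T) (hT : IsTree T) {s : List Bool} (hs : s ∈ T) :
    ∃ u, s <+: u ∧ Branching T u ∧
      ∀ t : List Bool, s <+: t → Branching T t → u.length ≤ t.length := by
  have hex : ∃ n, ∃ u, s <+: u ∧ Branching T u ∧ u.length = n := by
    obtain ⟨u, hsu, hu⟩ := hP.exists_branching_extension hT hs
    exact ⟨_, u, hsu, hu, rfl⟩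
  obtain ⟨u, hsu, hu, hlen⟩ := Nat.find_spec hex
  exact ⟨u, hsu, hu, fun t hst ht => hlen ▸ Nat.find_min' hex ⟨t, hst, ht, rfl⟩⟩

namespace PPTree

variable {T : Set (List Bool)}

theorem branching_stem (hT : PPTree T) : Branching T (stem T) := by
  obtain ⟨⟨s, hs⟩, hTree, -, hP⟩ := hT
  obtain ⟨u, -, hu, hmin⟩ :=
    hP.exists_shortest_branching_extension hTree (hTree [] s List.nil_prefix hs)
  have hex : ∃ s, IsStem T s := ⟨u, hu, fun t ht => hmin t List.nil_prefix ht⟩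
  rw [stem, dif_pos hex]
  exact hex.choose_spec.1

theorem branching_nextBranch (hT : PPTree T) {s : List Bool} (hs : s ∈ T) :
    Branching T (nextBranch T s) := by
  have hex := hT.2.2.2.exists_shortest_branching_extension hT.2.1 hs
  rw [nextBranch, dif_pos hex]
  exact hex.choose_spec.2.1

theorem branching_psi (hT : PPTree T) (σ : List Bool) : Branching T (psi T σ) := by
  unfold psi
  generalize stem T = τ, hT.branching_stem = hτ
  induction σ generalizing τ with
  | nil => exact hτ
  | cons i σ ih =>
    exact ih _ (hT.branching_nextBranch (hτ.append_mem i))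

theorem branching_of_mem_sigmaSet (hT : PPTree T) {ρ : List Bool} (hρ : ρ ∈ sigmaSet T) :
    Branching T ρ := by
  obtain ⟨⟨σ, -, rfl⟩, -⟩ := hρ
  exact hT.branching_psi _

end PPTree

theorem stem_eq_of_forall_branching_prefix {T : Set (List Bool)} {ρ : List Bool}
    (hρ : Branching T ρ) (h : ∀ t, Branching T t → ρ <+: t) : stem T = ρ := by
  have hex : ∃ s, IsStem T s := ⟨ρ, hρ, fun t ht => (h t ht).length_le⟩
  rw [stem, dif_pos hex]
  obtain ⟨hs, hmin⟩ := hex.choose_spec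
  exact ((h _ hs).eq_of_length (le_antisymm (h _ hs).length_le (hmin ρ hρ))).symm

section fullSub

variable {T : Set (List Bool)} {ρ : List Bool}

theorem IsTree.fullSub (hT : IsTree T) : IsTree (fullSub T ρ) := by
  rintro s t hst ⟨htT, hρt | htρ⟩
  · exact ⟨hT s t hst htT, List.prefix_or_prefix_of_prefix hρt hst⟩
  · exact ⟨hT s t hst htT, Or.inr (hst.trans htρ)⟩

theorem Branching.append_mem_fullSub (hρ : Branching T ρ) (a : Bool) :
    ρ ++ [a] ∈ fullSub T ρ :=
  ⟨hρ.append_mem a, Or.inl (List.prefix_append _ _)⟩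

theorem Pruned.fullSub (hP : Pruned T) (hρ : Branching T ρ) : Pruned (fullSub T ρ) := by
  rintro s ⟨hs, hρs | hsρ⟩
  · obtain ⟨t, ht, hst, hne⟩ := hP s hs
    exact ⟨t, ⟨ht, Or.inl (hρs.trans hst)⟩, hst, hne⟩
  · by_cases hsρ' : s = ρ
    · subst hsρ'
      exact ⟨s ++ [true], hρ.append_mem_fullSub true, List.prefix_append _ _, by simp⟩
    · exact ⟨ρ, ⟨hρ.1, Or.inl List.prefix_rfl⟩, hsρ, hsρ'⟩

theorem PerfectTree.fullSub (hP : PerfectTree T) (hρ : Branching T ρ) :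
    PerfectTree (fullSub T ρ) := by
  rintro s ⟨hs, hρs | hsρ⟩
  · obtain ⟨t₁, ht₁, t₂, ht₂, hst₁, hst₂, hinc⟩ := hP s hs
    exact ⟨t₁, ⟨ht₁, Or.inl (hρs.trans hst₁)⟩, t₂, ⟨ht₂, Or.inl (hρs.trans hst₂)⟩,
      hst₁, hst₂, hinc⟩
  · refine ⟨ρ ++ [false], hρ.append_mem_fullSub false, ρ ++ [true],
      hρ.append_mem_fullSub true, hsρ.trans (List.prefix_append _ _),
      hsρ.trans (List.prefix_append _ _), ?_, ?_⟩ <;> simp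

theorem PPTree.fullSub (hT : PPTree T) (hρ : Branching T ρ) : PPTree (fullSub T ρ) :=
  ⟨⟨ρ, hρ.1, Or.inl List.prefix_rfl⟩, hT.2.1.fullSub, hT.2.2.1.fullSub hρ,
    hT.2.2.2.fullSub hρ⟩

theorem prefix_of_branching_fullSub {t : List Bool} (ht : Branching (fullSub T ρ) t) :
    ρ <+: t := by
  obtain ⟨⟨-, hρt | htρ⟩, hf, htr⟩ := ht
  · exact hρt
  by_cases hteq : t = ρ
  · exact hteq ▸ List.prefix_rfl
  have hlt : t.length < ρ.length :=
    lt_of_le_of_ne htρ.length_le fun h => hteq (htρ.eq_of_length h)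
  have child_prefix : ∀ a : Bool, t ++ [a] ∈ fullSub T ρ → t ++ [a] <+: ρ := by
    rintro a ⟨-, hρta | htaρ⟩
    · have hle : ρ.length ≤ t.length + 1 := by simpa using hρta.length_le
      have hlen : ρ.length = (t ++ [a]).length := by
        simp only [List.length_append, List.length_singleton]; omega
      exact hρta.eq_of_length hlen ▸ List.prefix_rfl
    · exact htaρ
  have := List.prefix_of_prefix_length_le (child_prefix false hf) (child_prefix true htr)
    (by simp)
  simp at this

theorem stem_fullSub (hρ : Branching T ρ) : stem (fullSub T ρ) = ρ :=
  stem_eq_of_forall_branching_prefix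
    ⟨⟨hρ.1, Or.inl List.prefix_rfl⟩, hρ.append_mem_fullSub false, hρ.append_mem_fullSub true⟩
    fun _ => prefix_of_branching_fullSub

theorem prefix_stem_of_subset_fullSub {S : Set (List Bool)} (hS : PPTree S)
    (hST : S ⊆ fullSub T ρ) : ρ <+: stem S := by
  obtain ⟨h, hf, ht⟩ := hS.branching_stem
  exact prefix_of_branching_fullSub ⟨hST h, hST hf, hST ht⟩

end fullSub

theorem not_mem_nar_of_prefix {T : Set (List Bool)} {ρ τ : List Bool} (hρ : ρ ∈ sigmaSet T)
    (hρτ : ρ <+: τ) : τ ∉ Nar T := by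
  rintro ⟨-, X, -, hτX, hX⟩
  exact hX ρ hρ (hτX.of_isPrefix hρτ)

/-- For a perfect pruned tree `T` and `ρ = σ_k(T)`, the full subtree `T⟦k⟧` is a
perfect pruned tree with `stem(T⟦k⟧) = σ_k(T)`; moreover for every perfect pruned
subtree `S` of `T⟦k⟧`, `stem(S)` extends `σ_k(T)`, hence `stem(S) ∉ Nar(T)` and
`stem(S)` is not an initial segment of any element of `Nar(T)`. -/
theorem stmt13 (T : Set (List Bool)) (hT : PPTree T)
    (ρ : List Bool) (hρ : ρ ∈ sigmaSet T) :
    PPTree (fullSub T ρ) ∧ stem (fullSub T ρ) = ρ ∧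
      ∀ S : Set (List Bool), PPTree S → S ⊆ fullSub T ρ →
        ρ <+: stem S ∧ stem S ∉ Nar T ∧ ∀ τ ∈ Nar T, ¬ stem S <+: τ := by
  have hρT : Branching T ρ := hT.branching_of_mem_sigmaSet hρ
  refine ⟨hT.fullSub hρT, stem_fullSub hρT, fun S hS hST => ?_⟩
  have hρS : ρ <+: stem S := prefix_stem_of_subset_fullSub hS hST
  exact ⟨hρS, not_mem_nar_of_prefix hρ hρS,
    fun τ hτ hSτ => not_mem_nar_of_prefix hρ (hρS.trans hSτ) hτ⟩
end

section
/- Let (T_n)_{n ∈ ℕ} be a sequence of trees with T_0 = 2^{<ω} (the full binary tree) and, for each n, either T_{n+1} = Nar(T_n) or T_{n+1} = T_n⟦k⟧ for some k ∈ ℕ. Suppose that T_{n+1} is of the form T_n⟦k⟧ for infinitely many n. Then each stem(T_n) is an initial segment of stem(T_{n+1}), the lengths |stem(T_n)| tend to infinity, and ⋂_{n ∈ ℕ} [T_n] is the singleton {A}, where A ∈ 2^ω is the unique sequence extending every stem(T_n). -/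
/-!
Every tree `T_n` is generated by a perfect scheme: a map `e` on finite strings with
`e σ ⌢ i ⊑ e (σ ⌢ i)`, whose range is the set of branching nodes; then `ψ_{T_n} = e` and
`stem(T_n) = e(ε)`. Both operations preserve this form: if `σ_k = e(σ ⌢ 1)` then `T⟦k⟧` is
generated by `τ ↦ e(σ ⌢ 1 ⌢ τ)`, and `Nar(T)` is generated by `e` composed with interleaving
by zeros, because a path of `T` avoids all `σ_k` exactly when its code has `0` at every odd
position. Hence the stems form a chain which grows strictly at each step `T⟦k⟧`, every path
through all `T_n` extends every stem, and the limit `A` of the stems lies on each `T_n`, which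
is a tree containing arbitrarily long initial segments of `A`.
-/

open scoped Classical

open Filter

section InitialSegments

def seg (X : ℕ → Bool) (n : ℕ) : List Bool := (List.range n).map X

@[simp] lemma length_seg (X : ℕ → Bool) (n : ℕ) : (seg X n).length = n := by simp [seg]

lemma prefixOf_iff_getElem {σ : List Bool} {X : ℕ → Bool} :
    PrefixOf σ X ↔ ∀ k (hk : k < σ.length), σ[k] = X k := by
  simp [PrefixOf, List.ext_getElem_iff]

lemma prefixOf_seg (X : ℕ → Bool) (n : ℕ) : PrefixOf (seg X n) X :=
  prefixOf_iff_getElem.2 fun k hk => by simp [seg]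

lemma mem_treePaths_iff {T : Set (List Bool)} {X : ℕ → Bool} :
    X ∈ treePaths T ↔ ∀ n, seg X n ∈ T := Iff.rfl

namespace PrefixOf

variable {σ τ : List Bool} {X : ℕ → Bool}

lemma getElem (h : PrefixOf σ X) {k : ℕ} (hk : k < σ.length) : σ[k] = X k :=
  prefixOf_iff_getElem.1 h k hk

lemma of_prefix (hτσ : τ <+: σ) (h : PrefixOf σ X) : PrefixOf τ X :=
  prefixOf_iff_getElem.2 fun _ hk => (hτσ.getElem hk).trans (h.getElem _)

lemma snoc (h : PrefixOf σ X) : PrefixOf (σ ++ [X σ.length]) X := by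
  refine prefixOf_iff_getElem.2 fun k hk => ?_
  rw [List.getElem_append]
  split_ifs with hkσ
  · exact h.getElem hkσ
  · simp only [List.length_append, List.length_singleton] at hk
    simp [show k = σ.length by omega]

lemma prefix_of_length_le (hσ : PrefixOf σ X) (hτ : PrefixOf τ X)
    (hle : σ.length ≤ τ.length) : σ <+: τ := by
  refine List.prefix_iff_eq_take.2 (List.ext_getElem (by simpa using hle) fun k h₁ h₂ => ?_)
  rw [List.getElem_take, hσ.getElem h₁, hτ.getElem]

lemma prefix_of_seg (h : PrefixOf σ X) {n : ℕ} (hn : σ.length ≤ n) : σ <+: seg X n :=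
  h.prefix_of_length_le (prefixOf_seg X n) (by simpa using hn)

end PrefixOf

lemma eq_of_forall_prefixOf {s : ℕ → List Bool}
    (hlen : Tendsto (fun n => (s n).length) atTop atTop) {A B : ℕ → Bool}
    (hA : ∀ n, PrefixOf (s n) A) (hB : ∀ n, PrefixOf (s n) B) : A = B := by
  funext k
  obtain ⟨n, hn⟩ := (hlen.eventually_gt_atTop k).exists
  exact ((hA n).getElem hn).symm.trans ((hB n).getElem hn)

lemma exists_forall_prefixOf {s : ℕ → List Bool} (hs : ∀ n, s n <+: s (n + 1))
    (hlen : Tendsto (fun n => (s n).length) atTop atTop) :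
    ∃ A : ℕ → Bool, ∀ n, PrefixOf (s n) A := by
  have hchain : ∀ {m n}, m ≤ n → s m <+: s n := fun hmn =>
    Nat.le_induction List.prefix_rfl (fun n _ ih => ih.trans (hs n)) _ hmn
  choose N hN using fun k => (hlen.eventually_gt_atTop k).exists
  refine ⟨fun k => (s (N k))[k]'(hN k), fun n => prefixOf_iff_getElem.2 fun k hk => ?_⟩
  rcases le_total n (N k) with h | h
  · exact (hchain h).getElem hk
  · exact ((hchain h).getElem (hN k)).symm

end InitialSegments

lemma tendsto_atTop_of_monotone_of_infinite_lt {f : ℕ → ℕ} (hf : Monotone f)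
    (hjump : {n | f n < f (n + 1)}.Infinite) : Tendsto f atTop atTop := by
  refine tendsto_atTop_atTop_of_monotone hf fun b => ?_
  induction b with
  | zero => exact ⟨0, Nat.zero_le _⟩
  | succ b ih =>
    obtain ⟨a, ha⟩ := ih
    obtain ⟨m, hm, ham⟩ := hjump.exists_gt a
    exact ⟨m + 1, (ha.trans (hf ham.le)).trans_lt hm⟩

section Trees

variable {T : Set (List Bool)}

lemma mem_treePaths_of_forall_exists (hT : IsTree T) {X : ℕ → Bool}
    (h : ∀ m, ∃ σ ∈ T, m ≤ σ.length ∧ PrefixOf σ X) : X ∈ treePaths T := fun m => by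
  obtain ⟨σ, hσT, hmσ, hσX⟩ := h m
  exact hT _ _ ((prefixOf_seg X m).prefix_of_length_le hσX (by simpa using hmσ)) hσT

lemma nar_subset (T : Set (List Bool)) : Nar T ⊆ T := fun _ hτ => hτ.1

lemma fullSub_subset (T : Set (List Bool)) (ρ : List Bool) : fullSub T ρ ⊆ T := fun _ hτ => hτ.1

lemma Branching.mono {S : Set (List Bool)} {t : List Bool} (h : Branching S t) (hST : S ⊆ T) :
    Branching T t :=
  ⟨hST h.1, hST h.2.1, hST h.2.2⟩

lemma exists_mem_sigmaSet_prefix {τ : List Bool} (hτ : FormNode T τ) :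
    ∃ ρ ∈ sigmaSet T, ρ <+: τ := by
  induction h : τ.length using Nat.strong_induction_on generalizing τ with
  | _ n ih =>
    by_cases hmin : ∀ ρ : List Bool, ρ <+: τ → ρ ≠ τ → ¬ FormNode T ρ
    · exact ⟨τ, ⟨hτ, hmin⟩, List.prefix_rfl⟩
    · push Not at hmin
      obtain ⟨ρ, hρτ, hne, hρ⟩ := hmin
      have hlt : ρ.length < n :=
        h ▸ lt_of_le_of_ne hρτ.length_le fun hl => hne (hρτ.eq_of_length hl)
      obtain ⟨ρ', hρ', hρ'ρ⟩ := ih _ hlt hρ rfl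
      exact ⟨ρ', hρ', hρ'ρ.trans hρτ⟩

lemma not_prefixOf_of_formNode {X : ℕ → Bool} (havoid : ∀ ρ ∈ sigmaSet T, ¬ PrefixOf ρ X)
    {τ : List Bool} (hτ : FormNode T τ) : ¬ PrefixOf τ X := fun hτX => by
  obtain ⟨ρ, hρ, hρτ⟩ := exists_mem_sigmaSet_prefix hτ
  exact havoid ρ hρ (hτX.of_prefix hρτ)

def NoSplitBetween (T : Set (List Bool)) (p q : List Bool) : Prop :=
  ∀ τ ∈ T, p <+: τ → τ <+: q ∨ q <+: τ

namespace NoSplitBetween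

variable {p q : List Bool}

lemma prefix_of_branching (h : NoSplitBetween T p q) {t : List Bool} (hpt : p <+: t)
    (ht : Branching T t) : q <+: t := by
  rcases h t ht.1 hpt with htq | hqt
  · by_contra hnot
    have hlt : t.length < q.length :=
      lt_of_le_of_ne htq.length_le fun hl => hnot (htq.eq_of_length hl ▸ List.prefix_rfl)
    have hchild : ∀ b : Bool, t ++ [b] ∈ T → t ++ [b] <+: q := fun b hb => by
      rcases h _ hb (hpt.trans (List.prefix_append t [b])) with hbq | hqb
      · exact hbq
      · rw [hqb.eq_of_length (le_antisymm hqb.length_le (by simpa using hlt))]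
    simpa using
      List.prefix_of_prefix_length_le (hchild false ht.2.1) (hchild true ht.2.2) (by simp)
  · exact hqt

lemma nextBranch_eq (h : NoSplitBetween T p q) (hpq : p <+: q) (hq : Branching T q) :
    nextBranch T p = q := by
  have hmin : ∀ t, p <+: t → Branching T t → q.length ≤ t.length := fun t hpt ht =>
    (h.prefix_of_branching hpt ht).length_le
  have hex : ∃ s, p <+: s ∧ Branching T s ∧
      ∀ t, p <+: t → Branching T t → s.length ≤ t.length := ⟨q, hpq, hq, hmin⟩
  rw [nextBranch, dif_pos hex]
  obtain ⟨hps, hs, hsmin⟩ := hex.choose_spec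
  exact ((h.prefix_of_branching hps hs).eq_of_length
    (le_antisymm (hmin _ hps hs) (hsmin q hpq hq))).symm

lemma stem_eq (h : NoSplitBetween T [] q) (hq : Branching T q) : stem T = q := by
  have hmin : ∀ t, Branching T t → q.length ≤ t.length := fun t ht =>
    (h.prefix_of_branching List.nil_prefix ht).length_le
  have hex : ∃ s, IsStem T s := ⟨q, hq, hmin⟩
  rw [stem, dif_pos hex]
  obtain ⟨hs, hsmin⟩ := hex.choose_spec
  exact ((h.prefix_of_branching List.nil_prefix hs).eq_of_length
    (le_antisymm (hmin _ hs) (hsmin q hq))).symm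

lemma prefixOf (h : NoSplitBetween T p q) {X : ℕ → Bool} (hX : X ∈ treePaths T)
    (hpX : PrefixOf p X) (hpq : p <+: q) : PrefixOf q X := by
  have hq : q <+: seg X q.length :=
    (h _ (mem_treePaths_iff.1 hX q.length) (hpX.prefix_of_seg hpq.length_le)).elim
      (fun hqX => by rw [hqX.eq_of_length (by simp)]) id
  exact (prefixOf_seg X _).of_prefix hq

end NoSplitBetween

end Trees

section Schemes

def IsPerfectScheme (e : List Bool → List Bool) : Prop :=
  ∀ σ i, e σ ++ [i] <+: e (σ ++ [i])

def schemeTree (e : List Bool → List Bool) : Set (List Bool) := {τ | ∃ σ, τ <+: e σ}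

variable {e : List Bool → List Bool}

lemma isTree_schemeTree (e : List Bool → List Bool) : IsTree (schemeTree e) :=
  fun _ _ hst ⟨σ, h⟩ => ⟨σ, hst.trans h⟩

lemma mem_schemeTree (e : List Bool → List Bool) (σ : List Bool) : e σ ∈ schemeTree e :=
  ⟨σ, List.prefix_rfl⟩

lemma isPerfectScheme_id : IsPerfectScheme id := fun _ _ => List.prefix_rfl

lemma schemeTree_id : schemeTree id = Set.univ :=
  Set.eq_univ_of_forall fun τ => mem_schemeTree id τ

namespace IsPerfectScheme

lemma length_add_le (he : IsPerfectScheme e) (σ r : List Bool) :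
    (e σ).length + r.length ≤ (e (σ ++ r)).length := by
  induction r using List.reverseRecOn with
  | nil => simp
  | append_singleton r i ih =>
    have := (he (σ ++ r) i).length_le
    simp only [← List.append_assoc, List.length_append, List.length_singleton] at this ⊢
    omega

lemma length_le (he : IsPerfectScheme e) (σ : List Bool) : σ.length ≤ (e σ).length := by
  have := he.length_add_le [] σ
  rw [List.nil_append] at this
  omega

lemma prefix_append (he : IsPerfectScheme e) (σ r : List Bool) : e σ <+: e (σ ++ r) := by
  induction r using List.reverseRecOn with
  | nil => simp
  | append_singleton r i ih =>
    rw [← List.append_assoc]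
    exact ih.trans ((List.prefix_append _ _).trans (he _ i))

lemma monotone (he : IsPerfectScheme e) {σ ρ : List Bool} (h : σ <+: ρ) : e σ <+: e ρ := by
  obtain ⟨r, rfl⟩ := h
  exact he.prefix_append σ r

lemma snoc_prefix_of_prefix (he : IsPerfectScheme e) {μ ρ : List Bool} {i : Bool}
    (hμρ : μ <+: ρ) (h : e μ ++ [i] <+: e ρ) : μ ++ [i] <+: ρ := by
  obtain ⟨r, rfl⟩ := hμρ
  cases r with
  | nil => simpa using h.length_le
  | cons j r =>
    have hj : e μ ++ [j] <+: e (μ ++ j :: r) := (he μ j).trans (he.monotone ⟨r, by simp⟩)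
    obtain rfl : i = j := by simpa using List.prefix_of_prefix_length_le h hj (by simp)
    exact ⟨r, by simp⟩

lemma prefix_iff (he : IsPerfectScheme e) {μ ρ : List Bool} : e μ <+: e ρ ↔ μ <+: ρ := by
  refine ⟨fun h => ?_, he.monotone⟩
  induction μ using List.reverseRecOn with
  | nil => exact List.nil_prefix
  | append_singleton μ a ih =>
    exact he.snoc_prefix_of_prefix (ih ((he.prefix_append μ [a]).trans h)) ((he μ a).trans h)

lemma noSplitBetween_root (he : IsPerfectScheme e) : NoSplitBetween (schemeTree e) [] (e []) :=
  fun _ ⟨_, hτρ⟩ _ => List.prefix_or_prefix_of_prefix hτρ (he.monotone List.nil_prefix)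

lemma noSplitBetween_snoc (he : IsPerfectScheme e) (μ : List Bool) (i : Bool) :
    NoSplitBetween (schemeTree e) (e μ ++ [i]) (e (μ ++ [i])) := by
  rintro τ ⟨ρ, hτρ⟩ hiτ
  have hiρ : e μ ++ [i] <+: e ρ := hiτ.trans hτρ
  have hμρ : μ <+: ρ := he.prefix_iff.1 ((List.prefix_append _ _).trans hiρ)
  exact List.prefix_or_prefix_of_prefix hτρ (he.monotone (he.snoc_prefix_of_prefix hμρ hiρ))

lemma branching (he : IsPerfectScheme e) (σ : List Bool) : Branching (schemeTree e) (e σ) :=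
  ⟨mem_schemeTree e σ, ⟨_, he σ false⟩, ⟨_, he σ true⟩⟩

lemma stem_eq (he : IsPerfectScheme e) : stem (schemeTree e) = e [] :=
  he.noSplitBetween_root.stem_eq (he.branching [])

lemma psi_eq (he : IsPerfectScheme e) (σ : List Bool) : psi (schemeTree e) σ = e σ := by
  induction σ using List.reverseRecOn with
  | nil => exact he.stem_eq
  | append_singleton σ i ih =>
    rw [psi, List.foldl_append, ← psi, List.foldl_cons, List.foldl_nil, ih]
    exact (he.noSplitBetween_snoc σ i).nextBranch_eq (he σ i) (he.branching _)

lemma formNode_iff (he : IsPerfectScheme e) {τ : List Bool} :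
    FormNode (schemeTree e) τ ↔ ∃ σ : List Bool, Odd σ.length ∧ τ = e (σ ++ [true]) := by
  simp only [FormNode, he.psi_eq]

lemma prefixOf_root (he : IsPerfectScheme e) {X : ℕ → Bool} (hX : X ∈ treePaths (schemeTree e)) :
    PrefixOf (e []) X :=
  he.noSplitBetween_root.prefixOf hX (prefixOf_iff_getElem.2 (by simp)) List.nil_prefix

lemma prefixOf_snoc (he : IsPerfectScheme e) {X : ℕ → Bool} (hX : X ∈ treePaths (schemeTree e))
    {μ : List Bool} (h : PrefixOf (e μ) X) : PrefixOf (e (μ ++ [X (e μ).length])) X :=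
  (he.noSplitBetween_snoc μ _).prefixOf hX h.snoc (he μ _)

lemma append_left (he : IsPerfectScheme e) (μ : List Bool) :
    IsPerfectScheme fun σ => e (μ ++ σ) := fun σ i => by
  simpa only [List.append_assoc] using he (μ ++ σ) i

lemma fullSub_eq (he : IsPerfectScheme e) (μ : List Bool) :
    fullSub (schemeTree e) (e μ) = schemeTree fun σ => e (μ ++ σ) := by
  ext τ
  constructor
  · rintro ⟨⟨_, hτρ⟩, hμτ | hτμ⟩
    · obtain ⟨r, rfl⟩ := he.prefix_iff.1 (hμτ.trans hτρ)
      exact ⟨r, hτρ⟩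
    · exact ⟨[], by simpa using hτμ⟩
  · rintro ⟨σ, hτ⟩
    exact ⟨⟨_, hτ⟩, List.prefix_or_prefix_of_prefix (he.prefix_append μ σ) hτ⟩

end IsPerfectScheme

end Schemes

section Narrow

def interleaveFalse (σ : List Bool) : List Bool := σ.flatMap fun b => [b, false]

lemma interleaveFalse_snoc (σ : List Bool) (i : Bool) :
    interleaveFalse (σ ++ [i]) = interleaveFalse σ ++ [i] ++ [false] := by
  simp [interleaveFalse]

lemma interleaveFalse_cons (b : Bool) (σ : List Bool) :
    interleaveFalse (b :: σ) = b :: false :: interleaveFalse σ := rfl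

@[simp] lemma length_interleaveFalse (σ : List Bool) :
    (interleaveFalse σ).length = 2 * σ.length := by
  induction σ with
  | nil => rfl
  | cons b σ ih => simp only [interleaveFalse_cons, List.length_cons, ih]; ring

lemma getElem_interleaveFalse_append_replicate_of_odd (σ : List Bool) (n : ℕ) {k : ℕ}
    (hk : k < (interleaveFalse σ ++ List.replicate n false).length) (hodd : Odd k) :
    (interleaveFalse σ ++ List.replicate n false)[k] = false := by
  induction σ generalizing k with
  | nil => simp
  | cons b σ ih =>
    match k, hodd with
    | 1, _ => rfl
    | k + 2, hodd =>
      simp only [interleaveFalse_cons, List.cons_append, List.length_cons] at hk ⊢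
      exact ih (by omega) (by simpa [Nat.odd_add] using hodd)

lemma not_snoc_true_prefix_interleaveFalse_append_replicate (σ : List Bool) (n : ℕ)
    {δ : List Bool} (hδ : Odd δ.length) :
    ¬ δ ++ [true] <+: interleaveFalse σ ++ List.replicate n false := fun h => by
  have hlt : δ.length < (δ ++ [true]).length := by simp
  have := h.getElem hlt
  rw [getElem_interleaveFalse_append_replicate_of_odd σ n _ hδ] at this
  simp at this

variable {e : List Bool → List Bool}

namespace IsPerfectScheme

lemma comp_interleaveFalse (he : IsPerfectScheme e) : IsPerfectScheme (e ∘ interleaveFalse) :=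
  fun σ i => by
    simp only [Function.comp, interleaveFalse_snoc]
    exact (he _ i).trans (he.prefix_append _ _)

lemma exists_interleaveFalse_prefixOf (he : IsPerfectScheme e) {X : ℕ → Bool}
    (hX : X ∈ treePaths (schemeTree e)) (havoid : ∀ ρ ∈ sigmaSet (schemeTree e), ¬ PrefixOf ρ X)
    (m : ℕ) : ∃ σ : List Bool, σ.length = m ∧ PrefixOf (e (interleaveFalse σ)) X := by
  induction m with
  | zero => exact ⟨[], rfl, he.prefixOf_root hX⟩
  | succ m ih =>
    obtain ⟨σ, rfl, hσ⟩ := ih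
    set i := X (e (interleaveFalse σ)).length
    have hμ : PrefixOf (e (interleaveFalse σ ++ [i])) X := he.prefixOf_snoc hX hσ
    have hnext := he.prefixOf_snoc hX hμ
    have hfalse : X (e (interleaveFalse σ ++ [i])).length = false := by
      refine Bool.eq_false_iff.2 fun htrue => ?_
      rw [htrue] at hnext
      exact not_prefixOf_of_formNode havoid (he.formNode_iff.2 ⟨_, by simp, rfl⟩) hnext
    refine ⟨σ ++ [i], by simp, ?_⟩
    rwa [interleaveFalse_snoc, ← hfalse]

lemma exists_path_avoiding_sigmaSet (he : IsPerfectScheme e) (σ : List Bool) :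
    ∃ X ∈ treePaths (schemeTree e), PrefixOf (e (interleaveFalse σ)) X ∧
      ∀ ρ ∈ sigmaSet (schemeTree e), ¬ PrefixOf ρ X := by
  set s := fun n => e (interleaveFalse σ ++ List.replicate n false)
  have hs : ∀ n, s n <+: s (n + 1) := fun n =>
    he.monotone (by simp [List.replicate_succ', ← List.append_assoc])
  have hlen : ∀ n, n ≤ (s n).length := fun n =>
    le_trans (by simp) (he.length_le _)
  obtain ⟨X, hX⟩ := exists_forall_prefixOf hs (tendsto_atTop_mono hlen tendsto_id)
  refine ⟨X, mem_treePaths_of_forall_exists (isTree_schemeTree e)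
    fun m => ⟨s m, mem_schemeTree _ _, hlen m, hX m⟩, by simpa [s] using hX 0, ?_⟩
  rintro ρ ⟨hρ, -⟩ hρX
  obtain ⟨δ, hδ, rfl⟩ := he.formNode_iff.1 hρ
  exact not_snoc_true_prefix_interleaveFalse_append_replicate σ _ hδ
    (he.prefix_iff.1 (hρX.prefix_of_length_le (hX _) (hlen _)))

lemma nar_eq (he : IsPerfectScheme e) :
    Nar (schemeTree e) = schemeTree (e ∘ interleaveFalse) := by
  ext τ
  constructor
  · rintro ⟨-, X, hX, hτX, havoid⟩
    obtain ⟨σ, hσ, hσX⟩ := he.exists_interleaveFalse_prefixOf hX havoid τ.length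
    refine ⟨σ, hτX.prefix_of_length_le hσX ?_⟩
    show τ.length ≤ (e (interleaveFalse σ)).length
    have := he.length_le (interleaveFalse σ)
    simp only [length_interleaveFalse] at this
    omega
  · rintro ⟨σ, hτ⟩
    obtain ⟨X, hX, hσX, havoid⟩ := he.exists_path_avoiding_sigmaSet σ
    exact ⟨⟨_, hτ⟩, X, hX, hσX.of_prefix hτ, havoid⟩

end IsPerfectScheme

end Narrow

section SchemeTrees

def IsSchemeTree (T : Set (List Bool)) : Prop :=
  ∃ e, IsPerfectScheme e ∧ T = schemeTree e

lemma isSchemeTree_univ : IsSchemeTree Set.univ :=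
  ⟨id, isPerfectScheme_id, schemeTree_id.symm⟩

namespace IsSchemeTree

variable {T : Set (List Bool)}

lemma nar (hT : IsSchemeTree T) : IsSchemeTree (Nar T) := by
  obtain ⟨e, he, rfl⟩ := hT
  exact ⟨_, he.comp_interleaveFalse, he.nar_eq⟩

lemma fullSub_of_mem_sigmaSet (hT : IsSchemeTree T) {ρ : List Bool} (hρ : ρ ∈ sigmaSet T) :
    IsSchemeTree (fullSub T ρ) := by
  obtain ⟨e, he, rfl⟩ := hT
  obtain ⟨σ, -, rfl⟩ := he.formNode_iff.1 hρ.1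
  exact ⟨_, he.append_left _, he.fullSub_eq _⟩

lemma length_stem_lt_fullSub (hT : IsSchemeTree T) {ρ : List Bool} (hρ : ρ ∈ sigmaSet T) :
    (stem T).length < (stem (fullSub T ρ)).length := by
  obtain ⟨e, he, rfl⟩ := hT
  obtain ⟨σ, -, rfl⟩ := he.formNode_iff.1 hρ.1
  rw [he.fullSub_eq, (he.append_left _).stem_eq, he.stem_eq, List.append_nil]
  have := he.length_add_le [] (σ ++ [true])
  simp only [List.nil_append, List.length_append, List.length_singleton] at this
  omega

lemma stem_prefix_of_subset {S : Set (List Bool)} (hT : IsSchemeTree T) (hS : IsSchemeTree S)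
    (hST : S ⊆ T) : stem T <+: stem S := by
  obtain ⟨e, he, rfl⟩ := hT
  obtain ⟨f, hf, rfl⟩ := hS
  rw [he.stem_eq, hf.stem_eq]
  exact he.noSplitBetween_root.prefix_of_branching List.nil_prefix ((hf.branching []).mono hST)

lemma isTree (hT : IsSchemeTree T) : IsTree T := by
  obtain ⟨e, -, rfl⟩ := hT
  exact isTree_schemeTree e

lemma stem_mem (hT : IsSchemeTree T) : stem T ∈ T := by
  obtain ⟨e, he, rfl⟩ := hT
  exact he.stem_eq ▸ mem_schemeTree e []

lemma prefixOf_stem (hT : IsSchemeTree T) {X : ℕ → Bool} (hX : X ∈ treePaths T) :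
    PrefixOf (stem T) X := by
  obtain ⟨e, he, rfl⟩ := hT
  exact he.stem_eq ▸ he.prefixOf_root hX

end IsSchemeTree

end SchemeTrees

/-- Let `T_0 = 2^{<ω}` and let each `T_{n+1}` be either `Nar(T_n)` or a full subtree
`T_n⟦k⟧` (i.e. `fullSub (T n) ρ` for some `ρ = σ_k(T_n) ∈ sigmaSet (T n)`), with the
latter happening for infinitely many `n`.  Then each `stem(T_n)` is an initial segment
of `stem(T_{n+1})`, the lengths `|stem(T_n)|` tend to infinity, and `⋂_n [T_n]` is the
singleton `{A}`, where `A` is the unique sequence extending every `stem(T_n)`. -/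
theorem stmt14 (T : ℕ → Set (List Bool))
    (h0 : T 0 = Set.univ)
    (hstep : ∀ n : ℕ,
      T (n + 1) = Nar (T n) ∨ ∃ ρ ∈ sigmaSet (T n), T (n + 1) = fullSub (T n) ρ)
    (hinf : {n : ℕ | ∃ ρ ∈ sigmaSet (T n), T (n + 1) = fullSub (T n) ρ}.Infinite) :
    (∀ n : ℕ, stem (T n) <+: stem (T (n + 1))) ∧
      Filter.Tendsto (fun n => (stem (T n)).length) Filter.atTop Filter.atTop ∧
      ∃ A : ℕ → Bool, (∀ n : ℕ, PrefixOf (stem (T n)) A) ∧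
        (∀ B : ℕ → Bool, (∀ n : ℕ, PrefixOf (stem (T n)) B) → B = A) ∧
        (⋂ n : ℕ, treePaths (T n)) = {A} := by
  have hT : ∀ n, IsSchemeTree (T n) := by
    intro n
    induction n with
    | zero => exact h0 ▸ isSchemeTree_univ
    | succ n ih =>
      rcases hstep n with h | ⟨ρ, hρ, h⟩ <;> rw [h]
      exacts [ih.nar, ih.fullSub_of_mem_sigmaSet hρ]
  have hanti : Antitone T := antitone_nat_of_succ_le fun n => by
    rcases hstep n with h | ⟨ρ, -, h⟩ <;> rw [h]
    exacts [nar_subset _, fullSub_subset _ _]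
  have hpref : ∀ n, stem (T n) <+: stem (T (n + 1)) := fun n =>
    (hT n).stem_prefix_of_subset (hT (n + 1)) (hanti n.le_succ)
  have hlen : Tendsto (fun n => (stem (T n)).length) atTop atTop :=
    tendsto_atTop_of_monotone_of_infinite_lt
      (monotone_nat_of_le_succ fun n => (hpref n).length_le)
      (hinf.mono fun n hn => by
        obtain ⟨ρ, hρ, h⟩ := hn
        show (stem (T n)).length < (stem (T (n + 1))).length
        exact h ▸ (hT n).length_stem_lt_fullSub hρ)
  obtain ⟨A, hA⟩ := exists_forall_prefixOf hpref hlen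
  have huniq : ∀ B : ℕ → Bool, (∀ n, PrefixOf (stem (T n)) B) → B = A := fun B hB =>
    eq_of_forall_prefixOf hlen hB hA
  refine ⟨hpref, hlen, A, hA, huniq, Set.eq_singleton_iff_unique_mem.2 ⟨?_, fun X hX =>
    huniq X fun n => (hT n).prefixOf_stem (Set.mem_iInter.1 hX n)⟩⟩
  refine Set.mem_iInter.2 fun n => mem_treePaths_of_forall_exists (hT n).isTree fun m => ?_
  obtain ⟨N, hmN, hnN⟩ := ((hlen.eventually_ge_atTop m).and (eventually_ge_atTop n)).exists
  exact ⟨stem (T N), hanti hnN (hT N).stem_mem, hmN, hA N⟩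
end
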